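/- arXiv:1906.03689 — 10 statements merged into one kernel-verified Lean document; each statement's English description precedes it below -/
import Mathlib

section
/- Let w be a word of length n over an alphabet Σ and let 1 ≤ i ≤ n/2. Then w has a border of length i if and only if f(w) has an even palindromic prefix of order i, i.e., the prefix of f(w) of length 2i is a palindrome. -/
/-- The perfect shuffle of two lists: `shuffle [a₁,…,aₙ] [b₁,…,bₙ] = [a₁,b₁,a₂,b₂,…,aₙ,bₙ]`. -/
def shuffle {α : Type*} : List α → List α → List α
  | [], ys => ys
  | x :: xs, ys => x :: shuffle ys xs
termination_by xs ys => xs.length + ys.length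

/-- The map `f` : writing `x = y a z` with `|y| = |z|` and `a` empty or a single letter
(according to the parity of `|x|`), `f(x) = (y ⧢ z^R) a`. -/
def fmap {α : Type*} (x : List α) : List α :=
  shuffle (x.take (x.length / 2)) ((x.drop ((x.length + 1) / 2)).reverse)
    ++ (x.drop (x.length / 2)).take (x.length % 2)

@[simp] lemma shuffle_nil {α : Type*} (ys : List α) : shuffle [] ys = ys := by
  simp [shuffle]

@[simp] lemma shuffle_cons_cons {α : Type*} (x y : α) (xs ys : List α) :
    shuffle (x :: xs) (y :: ys) = x :: y :: shuffle xs ys := by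
  rw [shuffle, shuffle]

lemma shuffle_length {α : Type*} (xs ys : List α) :
    (shuffle xs ys).length = xs.length + ys.length := by
  induction xs generalizing ys with
  | nil => simp
  | cons x xs ih =>
    rw [shuffle]
    cases ys with
    | nil => simp [shuffle, ih]
    | cons y ys => simp [shuffle, ih]; omega

lemma shuffle_take {α : Type*} (i : ℕ) (xs ys : List α) (h : xs.length = ys.length) :
    (shuffle xs ys).take (2 * i) = shuffle (xs.take i) (ys.take i) := by
  induction i generalizing xs ys with
  | zero => simp
  | succ n ih =>
    cases xs with
    | nil =>
      have : ys = [] := by simpa using h.symm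
      simp [this]
    | cons x xs =>
      cases ys with
      | nil => simp at h
      | cons y ys =>
        have h2 : 2 * (n + 1) = (2 * n) + 1 + 1 := by ring
        rw [shuffle_cons_cons, h2, List.take_succ_cons, List.take_succ_cons,
          List.take_succ_cons, List.take_succ_cons, shuffle_cons_cons,
          ih xs ys (by simpa using h)]

lemma shuffle_append_pair {α : Type*} (xs ys : List α) (p q : α) (h : xs.length = ys.length) :
    shuffle (xs ++ [p]) (ys ++ [q]) = shuffle xs ys ++ [p, q] := by
  induction xs generalizing ys with
  | nil =>
    have : ys = [] := by simpa using h.symm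
    simp [this, shuffle]
  | cons x xs ih =>
    cases ys with
    | nil => simp at h
    | cons y ys =>
      simp only [List.cons_append, shuffle_cons_cons]
      rw [ih ys (by simpa using h)]

lemma shuffle_reverse {α : Type*} (xs ys : List α) (h : xs.length = ys.length) :
    (shuffle xs ys).reverse = shuffle ys.reverse xs.reverse := by
  induction xs generalizing ys with
  | nil =>
    have : ys = [] := by simpa using h.symm
    simp [this]
  | cons x xs ih =>
    cases ys with
    | nil => simp at h
    | cons y ys =>
      simp only [shuffle_cons_cons, List.reverse_cons]
      rw [ih ys (by simpa using h),
        shuffle_append_pair _ _ _ _ (by simpa using h.symm)]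
      simp

lemma shuffle_inj {α : Type*} (xs ys zs ws : List α) (h1 : xs.length = ys.length)
    (h2 : zs.length = ws.length) (he : shuffle xs ys = shuffle zs ws) :
    xs = zs ∧ ys = ws := by
  induction xs generalizing ys zs ws with
  | nil =>
    have hy : ys = [] := by simpa using h1.symm
    subst hy
    have hlen : zs.length + ws.length = 0 := by
      have := congrArg List.length he
      simp [shuffle_length] at this
      omega
    have hz : zs = [] := List.length_eq_zero_iff.mp (by omega)
    have hw : ws = [] := List.length_eq_zero_iff.mp (by omega)
    simp [hz, hw]
  | cons x xs ih =>
    cases ys with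
    | nil => simp at h1
    | cons y ys =>
      cases zs with
      | nil =>
        have hw : ws = [] := by simpa using h2.symm
        subst hw
        simp at he
      | cons z zs =>
        cases ws with
        | nil => simp at h2
        | cons v ws =>
          simp only [shuffle_cons_cons, List.cons.injEq] at he
          obtain ⟨hx, hy, hrest⟩ := he
          obtain ⟨ha, hb⟩ := ih ys zs ws (by simpa using h1) (by simpa using h2) hrest
          simp_all

/-- for a word `w` and `1 ≤ i ≤ |w|/2`, `w` has a border of length `i`
(its length-`i` prefix is also a suffix of `w`) if and only if the prefix of `f(w)` of
length `2i` is a palindrome (an even palindromic prefix of order `i`). -/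
theorem border_iff_evenPalindromicPrefix {α : Type*} (w : List α) (i : ℕ)
    (hi : 1 ≤ i) (hin : 2 * i ≤ w.length) :
    w.take i <:+ w ↔
      ((fmap w).take (2 * i)).reverse = (fmap w).take (2 * i) := by
  set n := w.length with hn
  set m := n / 2 with hm
  have him : i ≤ m := by omega
  have hlen1 : (w.take m).length = m := by
    simp only [List.length_take, ← hn]; omega
  have hlen2 : ((w.drop ((n + 1) / 2)).reverse).length = m := by
    simp only [List.length_reverse, List.length_drop, ← hn]; omega
  have hkey : (fmap w).take (2 * i) = shuffle (w.take i) (w.reverse.take i) := by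
    rw [fmap]
    rw [List.take_append_of_le_length (by rw [shuffle_length, hlen1, hlen2]; omega)]
    rw [shuffle_take i _ _ (hlen1.trans hlen2.symm)]
    congr 1
    · rw [List.take_take, min_eq_left him]
    · rw [List.reverse_drop, List.take_take]
      congr 1
      omega
  have hsuffix : (w.reverse.take i).reverse = w.drop (n - i) := by
    rw [List.take_reverse, List.reverse_reverse]
  rw [hkey, shuffle_reverse _ _ (by simp)]
  constructor
  · intro hb
    rw [List.suffix_iff_eq_drop] at hb
    have hti : (w.take i).length = i := by
      simp only [List.length_take, ← hn]; omega
    rw [hti] at hb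
    have h1 : (w.reverse.take i).reverse = w.take i := by
      rw [hsuffix]; exact hb.symm
    rw [h1, ← h1, List.reverse_reverse]
  · intro hp
    obtain ⟨h1, _⟩ := shuffle_inj _ _ _ _ (by simp) (by simp) hp
    rw [List.suffix_iff_eq_drop]
    have hti : (w.take i).length = i := by
      simp only [List.length_take, ← hn]; omega
    rw [hti, ← hsuffix, h1]
end

section
/- Fix an alphabet of size k, a length n, and a subset S ⊆ {1, …, ⌊n/2⌋}. The number of length-n words whose set of short border lengths is exactly S equals the number of length-n words whose set of orders of even palindromic prefixes is exactly S. -/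
/-- The set of short border lengths of a word `w`:
those `i` with `1 ≤ i ≤ |w|/2` such that the length-`i` prefix of `w` is also a suffix. -/
def shortBorderLengths {α : Type*} (w : List α) : Set ℕ :=
  {i | 1 ≤ i ∧ 2 * i ≤ w.length ∧ w.take i <:+ w}

/-- The set of orders of even palindromic prefixes of a word `w`:
those `i ≥ 1` such that the prefix of `w` of length `2i` exists and is a palindrome. -/
def eppOrders {α : Type*} (w : List α) : Set ℕ :=
  {i | 1 ≤ i ∧ 2 * i ≤ w.length ∧ (w.take (2 * i)).reverse = w.take (2 * i)}

namespace CardBorderAux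

/-- source index for position `m` in the shuffled word -/
def sIdx (n m : ℕ) : ℕ := if m % 2 = 0 then m / 2 else n - 1 - m / 2

/-- inverse of `sIdx` -/
def tIdx (n j : ℕ) : ℕ := if 2 * j < n then 2 * j else 2 * (n - 1 - j) + 1

lemma sIdx_lt {n m : ℕ} (h : m < n) : sIdx n m < n := by
  unfold sIdx; split <;> omega

lemma tIdx_lt {n j : ℕ} (h : j < n) : tIdx n j < n := by
  unfold tIdx; split <;> omega

lemma sIdx_tIdx {n j : ℕ} (h : j < n) : sIdx n (tIdx n j) = j := by
  unfold sIdx tIdx; split <;> split <;> omega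

lemma tIdx_sIdx {n m : ℕ} (h : m < n) : tIdx n (sIdx n m) = m := by
  unfold sIdx tIdx; split <;> split <;> omega

/-- the shuffle map: position `m` of `phi w` gets letter `sIdx n m` of `w`. -/
def phi {α : Type*} (w : List α) : List α :=
  List.ofFn (fun m : Fin w.length => w[sIdx w.length m]'(sIdx_lt m.isLt))

@[simp] lemma length_phi {α : Type*} (w : List α) : (phi w).length = w.length := by
  simp [phi]

lemma getElem?_phi {α : Type*} (w : List α) {m : ℕ} (h : m < w.length) :
    (phi w)[m]? = w[sIdx w.length m]? := by
  rw [phi, List.getElem?_ofFn]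
  simp [List.ofFnNthVal, h, List.getElem?_eq_getElem (sIdx_lt h)]

/-- the inverse shuffle -/
def psi {α : Type*} (w : List α) : List α :=
  List.ofFn (fun m : Fin w.length => w[tIdx w.length m]'(tIdx_lt m.isLt))

@[simp] lemma length_psi {α : Type*} (w : List α) : (psi w).length = w.length := by
  simp [psi]

lemma getElem?_psi {α : Type*} (w : List α) {m : ℕ} (h : m < w.length) :
    (psi w)[m]? = w[tIdx w.length m]? := by
  rw [psi, List.getElem?_ofFn]
  simp [List.ofFnNthVal, h, List.getElem?_eq_getElem (tIdx_lt h)]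

lemma phi_psi {α : Type*} (w : List α) : phi (psi w) = w := by
  apply List.ext_getElem?
  intro m
  by_cases h : m < w.length
  · rw [getElem?_phi (psi w) (by simpa using h), length_psi,
      getElem?_psi w (sIdx_lt h), tIdx_sIdx h]
  · rw [List.getElem?_eq_none (by simp; omega), List.getElem?_eq_none (by omega)]

lemma phi_inj {α : Type*} : Function.Injective (phi (α := α)) := by
  intro w w' h
  have hlen : w.length = w'.length := by
    have := congrArg List.length h; simpa using this
  apply List.ext_getElem?
  intro j
  by_cases hj : j < w.length
  · have h1 : (phi w)[tIdx w.length j]? = (phi w')[tIdx w.length j]? := by rw [h]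
    rw [getElem?_phi w (tIdx_lt hj), getElem?_phi w' (by rw [← hlen]; exact tIdx_lt hj)] at h1
    rw [sIdx_tIdx hj, ← hlen, sIdx_tIdx hj] at h1
    exact h1
  · rw [List.getElem?_eq_none (by omega), List.getElem?_eq_none (by omega)]

/-- palindrome ↔ pointwise condition -/
lemma reverse_eq_self_iff {α : Type*} (l : List α) :
    l.reverse = l ↔ ∀ m, m < l.length → l[m]? = l[l.length - 1 - m]? := by
  constructor
  · intro H m hm
    conv_lhs => rw [← H]
    exact List.getElem?_reverse hm
  · intro H
    apply List.ext_getElem?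
    intro m
    by_cases hm : m < l.length
    · rw [List.getElem?_reverse hm]
      exact (H m hm).symm
    · rw [List.getElem?_eq_none (by simpa using Nat.le_of_not_lt hm),
        List.getElem?_eq_none (Nat.le_of_not_lt hm)]

/-- suffix ↔ pointwise condition -/
lemma take_suffix_iff {α : Type*} (w : List α) (i : ℕ) (hi : i ≤ w.length) :
    w.take i <:+ w ↔ ∀ j, j < i → w[j]? = w[w.length - i + j]? := by
  have hl : (w.take i).length = i := by simp [List.length_take]; omega
  rw [List.suffix_iff_eq_drop, hl]
  constructor
  · intro H j hj
    have h1 := congrArg (fun l => l[j]?) H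
    simp only [List.getElem?_take, if_pos hj, List.getElem?_drop] at h1
    exact h1
  · intro H
    apply List.ext_getElem?
    intro j
    rw [List.getElem?_take, List.getElem?_drop]
    split
    · exact H j ‹_›
    · rw [List.getElem?_eq_none (by omega)]

/-- key combinatorial lemma -/
lemma epp_phi {α : Type*} (w : List α) : eppOrders (phi w) = shortBorderLengths w := by
  set n := w.length with hn
  ext i
  simp only [eppOrders, shortBorderLengths, Set.mem_setOf_eq, length_phi, ← hn]
  refine and_congr_right fun h1 => and_congr_right fun h2 => ?_
  rw [take_suffix_iff w i (by omega), reverse_eq_self_iff]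
  have hlt : ((phi w).take (2 * i)).length = 2 * i := by
    simp [List.length_take]; omega
  simp only [hlt, List.getElem?_take]
  constructor
  · intro H j hj
    have hb1 : 2 * j < w.length := by omega
    have hb2 : 2 * i - 1 - 2 * j < w.length := by omega
    have := H (2 * j) (by omega)
    rw [if_pos (by omega), if_pos (by omega)] at this
    rw [getElem?_phi w hb1] at this
    rw [getElem?_phi w hb2] at this
    have e1 : sIdx n (2 * j) = j := by unfold sIdx; split <;> omega
    have e2 : sIdx n (2 * i - 1 - 2 * j) = n - i + j := by
      unfold sIdx; split <;> omega
    rw [← hn, e1, e2] at this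
    exact this
  · intro H m hm
    rw [if_pos hm, if_pos (by omega)]
    have hb1 : m < w.length := by omega
    have hb2 : 2 * i - 1 - m < w.length := by omega
    rw [getElem?_phi w hb1, getElem?_phi w hb2, ← hn]
    rcases Nat.even_or_odd m with ⟨a, ha⟩ | ⟨a, ha⟩
    · have e1 : sIdx n m = a := by unfold sIdx; split <;> omega
      have e2 : sIdx n (2 * i - 1 - m) = n - i + a := by unfold sIdx; split <;> omega
      rw [e1, e2]
      exact H a (by omega)
    · have e1 : sIdx n m = n - i + (i - 1 - a) := by unfold sIdx; split <;> omega
      have e2 : sIdx n (2 * i - 1 - m) = i - 1 - a := by unfold sIdx; split <;> omega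
      rw [e1, e2]
      exact (H (i - 1 - a) (by omega)).symm

end CardBorderAux

open CardBorderAux in
/-- for a `k`-letter alphabet, a length `n`, and `S ⊆ {1,…,⌊n/2⌋}`,
the number of length-`n` words whose set of short border lengths is exactly `S` equals
the number of length-`n` words whose set of even palindromic prefix orders is exactly `S`. -/
theorem card_shortBorders_eq_card_eppOrders (k n : ℕ) (S : Set ℕ)
    (hS : S ⊆ Set.Icc 1 (n / 2)) :
    {w : List (Fin k) | w.length = n ∧ shortBorderLengths w = S}.ncard =
      {w : List (Fin k) | w.length = n ∧ eppOrders w = S}.ncard := by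
  have himg : phi '' {w : List (Fin k) | w.length = n ∧ shortBorderLengths w = S} =
      {w : List (Fin k) | w.length = n ∧ eppOrders w = S} := by
    ext v
    simp only [Set.mem_image, Set.mem_setOf_eq]
    constructor
    · rintro ⟨w, ⟨hw, hb⟩, rfl⟩
      exact ⟨by simp [hw], by rw [epp_phi, hb]⟩
    · rintro ⟨hv, he⟩
      exact ⟨psi v, ⟨by simp [hv], by rw [← epp_phi (psi v), phi_psi, he]⟩, phi_psi v⟩
  rw [← himg, Set.ncard_image_of_injOn (phi_inj.injOn)]
end

section
/- For all integers k ≥ 1 and n ≥ 1, the number of length-n words over a k-letter alphabet that are unbordered equals the number of length-n words over a k-letter alphabet that have no even palindromic prefix; that is, u_k(n) = v_k(n). -/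
/-- A word `w` is bordered if some word `u` with `0 < |u| < |w|` is both a prefix
and a suffix of `w`. -/
def IsBordered {α : Type*} (w : List α) : Prop :=
  ∃ u : List α, u ≠ [] ∧ u.length < w.length ∧ u <+: w ∧ u <:+ w

/-- A word has an even palindromic prefix if some nonempty prefix of even length
is a palindrome. -/
def HasEvenPalPrefix {α : Type*} (w : List α) : Prop :=
  ∃ p : List α, p ≠ [] ∧ Even p.length ∧ p <+: w ∧ p.reverse = p

/-!
Both counts `c(n)` satisfy `c(0) = 1`, `c(2m+1) = k c(2m)` and `c(2m+2) = k c(2m+1) - c(m+1)`.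

A word is bordered iff it has a border of at most half its length, since a longer border overlaps
itself and its overlap is a shorter border. Hence deleting the middle letter of a word of odd
length does not change borderedness, and deleting the middle letter of a word of even length
changes it exactly for the squares `t t` with `t` unbordered.

Appending a letter to a word of even length never creates an even palindromic prefix; appending
one to a word of odd length creates one exactly when the result is a palindrome `x xᴿ`. A
palindromic prefix of a palindrome longer than half of it overlaps its mirror image, and the
overlap is a shorter palindromic prefix, so `x xᴿ` has a proper even palindromic prefix iff `x`
has an even palindromic prefix.
-/

namespace List

variable {α : Type*}

theorem drop_prefix_of_prefix_of_suffix {u w : List α} (hp : u <+: w) (hs : u <:+ w) :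
    u.drop (w.length - u.length) <+: u := by
  obtain ⟨a, rfl⟩ := hp
  have h := suffix_iff_eq_drop.mp hs
  simp only [length_append, Nat.add_sub_cancel_left] at h ⊢
  rw [drop_append] at h
  exact ⟨_, h.symm⟩

theorem reverse_eq_self_of_prefix_of_suffix {p q : List α} (hp : p.reverse = p) (hqp : q <+: p)
    (hqs : q <:+ p) : q.reverse = q := by
  have hrev : q.reverse <+: p := hp ▸ reverse_prefix.mpr hqs
  exact (prefix_of_prefix_length_le hrev hqp (by simp)).eq_of_length (by simp)

theorem take_append_reverse_take_of_reverse_eq {w : List α} {m : ℕ} (hw : w.reverse = w)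
    (hlen : w.length = 2 * m) : w.take m ++ (w.take m).reverse = w := by
  rw [reverse_take, hw, hlen, show 2 * m - m = m by omega, take_append_drop]

theorem exists_eq_append_cons_of_lt {w : List α} {i : ℕ} (hi : i < w.length) :
    ∃ x c y, w = x ++ c :: y ∧ x.length = i :=
  ⟨w.take i, w[i], w.drop (i + 1), by rw [getElem_cons_drop, take_append_drop],
    by simp; omega⟩

theorem eraseIdx_append_cons (x y : List α) (c : α) :
    (x ++ c :: y).eraseIdx x.length = x ++ y := by
  simp [eraseIdx_append_of_length_le]

theorem eraseIdx_append_singleton (v : List α) (c : α) : (v ++ [c]).eraseIdx v.length = v := by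
  simpa using eraseIdx_append_cons v [] c

theorem append_self_injective : Function.Injective fun t : List α => t ++ t := by
  intro s t h
  have hlen := congrArg length h
  simp only [length_append] at hlen
  exact (append_inj h (by omega)).1

theorem append_reverse_injective : Function.Injective fun x : List α => x ++ x.reverse := by
  intro x y h
  have hlen := congrArg length h
  simp only [length_append, length_reverse] at hlen
  exact (append_inj h (by omega)).1

theorem ncard_setOf_eraseIdx_mem {s : Set (List α)} {n i : ℕ} (hs : ∀ w ∈ s, w.length = n)
    (hi : i ≤ n) :
    {w : List α | w.length = n + 1 ∧ w.eraseIdx i ∈ s}.ncard = s.ncard * Nat.card α := by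
  rw [← Set.ncard_univ α, ← Set.ncard_prod]
  symm
  refine Set.ncard_congr (fun p _ => p.1.insertIdx i p.2) ?_ ?_ ?_
  · rintro ⟨w, c⟩ ⟨hw, -⟩
    simp [length_insertIdx, hs w hw, hi, eraseIdx_insertIdx_self, hw]
  · rintro ⟨w, c⟩ ⟨w', c'⟩ ⟨hw, -⟩ ⟨hw', -⟩ h
    have hww' : w = w' := by simpa using congrArg (·.eraseIdx i) h
    subst hww'
    have hcc' := congrArg (·[i]?) h
    simp only [getElem?_insertIdx_self, hs w hw, hi, if_true, Option.some.injEq] at hcc'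
    rw [hcc']
  · rintro w ⟨hw, hws⟩
    exact ⟨(w.eraseIdx i, w[i]), ⟨hws, trivial⟩, insertIdx_eraseIdx_getElem (by omega)⟩

end List

variable {α : Type*}

section Border

theorem isBordered_iff_exists_two_mul_le {w : List α} :
    IsBordered w ↔ ∃ u, u ≠ [] ∧ 2 * u.length ≤ w.length ∧ u <+: w ∧ u <:+ w := by
  refine ⟨fun ⟨u, hne, hlt, hp, hs⟩ => ?_, fun ⟨u, hne, hle, hp, hs⟩ => ⟨u, hne, ?_, hp, hs⟩⟩
  · induction hn : u.length using Nat.strong_induction_on generalizing u with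
    | _ n ih =>
      by_cases hle : 2 * u.length ≤ w.length
      · exact ⟨u, hne, hle, hp, hs⟩
      have hlen : (u.drop (w.length - u.length)).length = 2 * u.length - w.length := by
        simp only [List.length_drop]; omega
      exact ih _ (by omega) _ (List.ne_nil_of_length_pos (by omega)) (by omega)
        ((List.drop_prefix_of_prefix_of_suffix hp hs).trans hp)
        ((List.drop_suffix _ _).trans hs) rfl
  · have := List.length_pos_iff.mpr hne
    omega

theorem isBordered_append_iff {x y : List α} (hxy : x.length ≤ y.length + 1)
    (hyx : y.length ≤ x.length + 1) :
    IsBordered (x ++ y) ↔ ∃ u, u ≠ [] ∧ u <+: x ∧ u <:+ y := by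
  rw [isBordered_iff_exists_two_mul_le, List.length_append]
  constructor
  · rintro ⟨u, hne, hle, hp, hs⟩
    exact ⟨u, hne, List.prefix_of_prefix_length_le hp (List.prefix_append x y) (by omega),
      List.suffix_of_suffix_length_le hs (List.suffix_append x y) (by omega)⟩
  · rintro ⟨u, hne, hp, hs⟩
    have := hp.length_le
    have := hs.length_le
    exact ⟨u, hne, by omega, hp.trans (List.prefix_append x y),
      hs.trans (List.suffix_append x y)⟩

theorem isBordered_append_cons_iff {x y : List α} {c : α} (hyx : y.length ≤ x.length)
    (hxy : x.length ≤ y.length + 1) :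
    IsBordered (x ++ c :: y) ↔ IsBordered (x ++ y) ∨ x = c :: y := by
  rw [isBordered_append_iff (by simp; omega) (by simp; omega),
    isBordered_append_iff (by omega) (by omega)]
  simp only [List.suffix_cons_iff]
  constructor
  · rintro ⟨u, hne, hp, rfl | hs⟩
    · exact Or.inr (hp.eq_of_length (by have := hp.length_le; simp only [List.length_cons] at this ⊢; omega)).symm
    · exact Or.inl ⟨u, hne, hp, hs⟩
  · rintro (⟨u, hne, hp, hs⟩ | rfl)
    · exact ⟨u, hne, hp, Or.inr hs⟩
    · exact ⟨_, List.cons_ne_nil _ _, List.prefix_refl _, Or.inl rfl⟩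

theorem isBordered_cons_append_self_iff (a : α) (s : List α) :
    IsBordered ((a :: s) ++ s) ↔ IsBordered (a :: s) := by
  rw [isBordered_append_iff (by simp) (by simp; omega)]
  constructor
  · rintro ⟨u, hne, hp, hs⟩
    have := hs.length_le
    exact ⟨u, hne, by simp; omega, hp, hs.trans (List.suffix_cons a s)⟩
  · rintro ⟨u, hne, hlt, hp, hs⟩
    rcases List.suffix_cons_iff.mp hs with rfl | hs
    · exact absurd hlt (lt_irrefl _)
    · exact ⟨u, hne, hp, hs⟩

end Border

section EvenPalPrefix

theorem hasEvenPalPrefix_append_singleton {w : List α} {c : α} :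
    HasEvenPalPrefix (w ++ [c]) ↔
      HasEvenPalPrefix w ∨ Even (w ++ [c]).length ∧ (w ++ [c]).reverse = w ++ [c] := by
  simp only [HasEvenPalPrefix, List.prefix_concat_iff]
  constructor
  · rintro ⟨p, hne, he, rfl | hp, hpal⟩
    · exact Or.inr ⟨he, hpal⟩
    · exact Or.inl ⟨p, hne, he, hp, hpal⟩
  · rintro (⟨p, hne, he, hp, hpal⟩ | ⟨he, hpal⟩)
    · exact ⟨p, hne, he, Or.inr hp, hpal⟩
    · exact ⟨_, by simp, he, Or.inl rfl, hpal⟩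

theorem exists_evenPalPrefix_two_mul_le {w p : List α} (hw : w.reverse = w) (hwe : Even w.length)
    (hne : p ≠ []) (hpe : Even p.length) (hlt : p.length < w.length) (hp : p <+: w)
    (hpal : p.reverse = p) :
    ∃ q, q ≠ [] ∧ Even q.length ∧ 2 * q.length ≤ w.length ∧ q <+: w ∧
      q.reverse = q := by
  induction hn : p.length using Nat.strong_induction_on generalizing p with
  | _ n ih =>
    by_cases hle : 2 * p.length ≤ w.length
    · exact ⟨p, hne, hpe, hle, hp, hpal⟩
    have hs : p <:+ w := by rw [← List.reverse_prefix, hw, hpal]; exact hp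
    have hqp := List.drop_prefix_of_prefix_of_suffix hp hs
    have hlen : (p.drop (w.length - p.length)).length = 2 * p.length - w.length := by
      simp only [List.length_drop]; omega
    refine ih _ (by omega) (List.ne_nil_of_length_pos (by omega)) ?_ (by omega) (hqp.trans hp)
      (List.reverse_eq_self_of_prefix_of_suffix hpal hqp (List.drop_suffix _ _)) rfl
    rw [hlen, Nat.even_sub (by omega)]
    exact iff_of_true (even_two_mul _) hwe

theorem hasEvenPalPrefix_iff_of_append_singleton_eq {v x : List α} {c : α}
    (h : v ++ [c] = x ++ x.reverse) : HasEvenPalPrefix v ↔ HasEvenPalPrefix x := by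
  have hlen := congrArg List.length h
  simp only [List.length_append, List.length_singleton, List.length_reverse] at hlen
  have hxv : x <+: v := List.prefix_of_prefix_length_le (h ▸ List.prefix_append x _)
    (List.prefix_append v [c]) (by omega)
  constructor
  · rintro ⟨p, hne, hpe, hp, hpal⟩
    have hpw : p <+: x ++ x.reverse := h ▸ hp.trans (List.prefix_append v [c])
    obtain ⟨q, hqne, hqe, hqle, hq, hqpal⟩ := exists_evenPalPrefix_two_mul_le
      (by simp) (by simp [← two_mul]) hne hpe (by have := hp.length_le; simp; omega) hpw hpal
    exact ⟨q, hqne, hqe,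
      List.prefix_of_prefix_length_le hq (List.prefix_append x _) (by simp at hqle; omega), hqpal⟩
  · rintro ⟨p, hne, hpe, hp, hpal⟩
    exact ⟨p, hne, hpe, hp.trans hxv, hpal⟩

end EvenPalPrefix

section Recurrences

variable (α)

def unborderedWords (n : ℕ) : Set (List α) := {w | w.length = n ∧ ¬ IsBordered w}

def evenPalPrefixFreeWords (n : ℕ) : Set (List α) := {w | w.length = n ∧ ¬ HasEvenPalPrefix w}

theorem finite_unborderedWords [Finite α] (n : ℕ) : (unborderedWords α n).Finite :=
  (List.finite_length_eq α n).subset fun _ hw => hw.1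

theorem finite_evenPalPrefixFreeWords [Finite α] (n : ℕ) :
    (evenPalPrefixFreeWords α n).Finite :=
  (List.finite_length_eq α n).subset fun _ hw => hw.1

theorem unborderedWords_zero : unborderedWords α 0 = {[]} := by
  ext w
  simp only [unborderedWords, IsBordered, Set.mem_ofPred_eq, Set.mem_singleton_iff,
    List.length_eq_zero_iff]
  constructor
  · exact fun h => h.1
  · rintro rfl
    simp

theorem evenPalPrefixFreeWords_zero : evenPalPrefixFreeWords α 0 = {[]} := by
  ext w
  simp only [evenPalPrefixFreeWords, HasEvenPalPrefix, Set.mem_ofPred_eq, Set.mem_singleton_iff,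
    List.length_eq_zero_iff]
  constructor
  · exact fun h => h.1
  · rintro rfl
    simp

theorem ncard_unborderedWords_two_mul_add_one (m : ℕ) :
    (unborderedWords α (2 * m + 1)).ncard = (unborderedWords α (2 * m)).ncard * Nat.card α := by
  rw [← List.ncard_setOf_eraseIdx_mem (fun w hw => hw.1) (show m ≤ 2 * m by omega)]
  congr 1
  ext w
  simp only [unborderedWords, Set.mem_ofPred_eq, and_congr_right_iff]
  intro hw
  obtain ⟨x, c, y, rfl, hx⟩ := List.exists_eq_append_cons_of_lt (show m < w.length by omega)
  have hy : y.length = m := by simp at hw; omega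
  have hxc : x ≠ c :: y := fun h => by simpa [hx, hy] using congrArg List.length h
  have hxy : (x ++ y).length = 2 * m := by simp [hx, hy]; omega
  rw [← hx, List.eraseIdx_append_cons, isBordered_append_cons_iff (by omega) (by omega), hx, hxy]
  simp [hxc]

theorem setOf_eraseIdx_mem_unborderedWords (m : ℕ) :
    {w | w.length = 2 * m + 2 ∧ w.eraseIdx (m + 1) ∈ unborderedWords α (2 * m + 1)} =
      unborderedWords α (2 * m + 2) ∪ (fun t => t ++ t) '' unborderedWords α (m + 1) := by
  ext w
  simp only [unborderedWords, Set.mem_ofPred_eq, Set.mem_union, Set.mem_image]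
  constructor
  · rintro ⟨hw, -, hb⟩
    obtain ⟨x, c, y, rfl, hx⟩ :=
      List.exists_eq_append_cons_of_lt (show m + 1 < w.length by omega)
    have hy : y.length = m := by simp at hw; omega
    rw [← hx, List.eraseIdx_append_cons] at hb
    by_cases hxc : x = c :: y
    · subst hxc
      exact Or.inr ⟨c :: y, ⟨hx, (isBordered_cons_append_self_iff c y).not.mp hb⟩, rfl⟩
    · refine Or.inl ⟨hw, ?_⟩
      rw [isBordered_append_cons_iff (by omega) (by omega)]
      tauto
  · rintro (⟨hw, hb⟩ | ⟨t, ⟨ht, hb⟩, rfl⟩)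
    · obtain ⟨x, c, y, rfl, hx⟩ :=
        List.exists_eq_append_cons_of_lt (show m + 1 < w.length by omega)
      have hy : y.length = m := by simp at hw; omega
      rw [← hx, List.eraseIdx_append_cons]
      refine ⟨hw, by simp; omega, fun h => hb ?_⟩
      exact (isBordered_append_cons_iff (by omega) (by omega)).mpr (Or.inl h)
    · obtain ⟨a, s, rfl⟩ := List.exists_cons_of_length_eq_add_one ht
      have hs : s.length = m := by simpa using ht
      rw [← ht, List.eraseIdx_append_cons]
      refine ⟨by simp; omega, by simp; omega, ?_⟩
      exact (isBordered_cons_append_self_iff a s).not.mpr hb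

theorem ncard_unborderedWords_two_mul_add_two [Finite α] (m : ℕ) :
    (unborderedWords α (2 * m + 2)).ncard + (unborderedWords α (m + 1)).ncard =
      (unborderedWords α (2 * m + 1)).ncard * Nat.card α := by
  have hdisj : Disjoint (unborderedWords α (2 * m + 2))
      ((fun t => t ++ t) '' unborderedWords α (m + 1)) := by
    rw [Set.disjoint_right]
    rintro _ ⟨t, ⟨ht, -⟩, rfl⟩ ⟨-, hb⟩
    exact hb ⟨t, List.ne_nil_of_length_pos (by omega), by simp; omega, List.prefix_append t t,
      List.suffix_append t t⟩
  calc (unborderedWords α (2 * m + 2)).ncard + (unborderedWords α (m + 1)).ncard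
      = (unborderedWords α (2 * m + 2)).ncard +
          ((fun t => t ++ t) '' unborderedWords α (m + 1)).ncard := by
        rw [Set.ncard_image_of_injective _ List.append_self_injective]
    _ = (unborderedWords α (2 * m + 2) ∪
          (fun t => t ++ t) '' unborderedWords α (m + 1)).ncard :=
        (Set.ncard_union_eq hdisj (finite_unborderedWords α _)
          ((finite_unborderedWords α _).image _)).symm
    _ = (unborderedWords α (2 * m + 1)).ncard * Nat.card α := by
        rw [← setOf_eraseIdx_mem_unborderedWords, List.ncard_setOf_eraseIdx_mem (fun w hw => hw.1)
          (by omega)]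

theorem ncard_evenPalPrefixFreeWords_two_mul_add_one (m : ℕ) :
    (evenPalPrefixFreeWords α (2 * m + 1)).ncard =
      (evenPalPrefixFreeWords α (2 * m)).ncard * Nat.card α := by
  rw [← List.ncard_setOf_eraseIdx_mem (fun w hw => hw.1) le_rfl]
  congr 1
  ext w
  simp only [evenPalPrefixFreeWords, Set.mem_ofPred_eq, and_congr_right_iff]
  intro hw
  obtain ⟨v, c, rfl⟩ := (List.eq_nil_or_concat' w).resolve_left (by rintro rfl; simp at hw)
  have hv : v.length = 2 * m := by simpa using hw
  have hodd : ¬ Even (v ++ [c]).length := by simp [hv]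
  rw [← hv, List.eraseIdx_append_singleton, hasEvenPalPrefix_append_singleton]
  simp only [hodd, false_and, or_false, true_and]

theorem setOf_eraseIdx_mem_evenPalPrefixFreeWords (m : ℕ) :
    {w | w.length = 2 * m + 2 ∧
        w.eraseIdx (2 * m + 1) ∈ evenPalPrefixFreeWords α (2 * m + 1)} =
      evenPalPrefixFreeWords α (2 * m + 2) ∪
        (fun x => x ++ x.reverse) '' evenPalPrefixFreeWords α (m + 1) := by
  ext w
  simp only [evenPalPrefixFreeWords, Set.mem_ofPred_eq, Set.mem_union, Set.mem_image]
  constructor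
  · rintro ⟨hw, -, hv⟩
    obtain ⟨v, c, rfl⟩ := (List.eq_nil_or_concat' w).resolve_left (by rintro rfl; simp at hw)
    have hvlen : v.length = 2 * m + 1 := by simpa using hw
    rw [← hvlen, List.eraseIdx_append_singleton] at hv
    by_cases hpal : (v ++ [c]).reverse = v ++ [c]
    · have hhalf :=
        List.take_append_reverse_take_of_reverse_eq hpal (m := m + 1) (by rw [hw]; ring)
      refine Or.inr ⟨_, ⟨by simp; omega, ?_⟩, hhalf⟩
      exact (hasEvenPalPrefix_iff_of_append_singleton_eq hhalf.symm).not.mp hv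
    · refine Or.inl ⟨hw, ?_⟩
      rw [hasEvenPalPrefix_append_singleton]
      tauto
  · rintro (⟨hw, hv⟩ | ⟨x, ⟨hx, hv⟩, hw⟩)
    · obtain ⟨v, c, rfl⟩ := (List.eq_nil_or_concat' w).resolve_left (by rintro rfl; simp at hw)
      have hvlen : v.length = 2 * m + 1 := by simpa using hw
      rw [← hvlen, List.eraseIdx_append_singleton]
      exact ⟨hw, rfl, fun h => hv (hasEvenPalPrefix_append_singleton.mpr (Or.inl h))⟩
    · have hwlen : w.length = 2 * m + 2 := by rw [← hw]; simp; omega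
      obtain ⟨v, c, rfl⟩ :=
        (List.eq_nil_or_concat' w).resolve_left (by rintro rfl; simp at hwlen)
      have hvlen : v.length = 2 * m + 1 := by simpa using hwlen
      rw [← hvlen, List.eraseIdx_append_singleton]
      exact ⟨hwlen, rfl, (hasEvenPalPrefix_iff_of_append_singleton_eq hw.symm).not.mpr hv⟩

theorem ncard_evenPalPrefixFreeWords_two_mul_add_two [Finite α] (m : ℕ) :
    (evenPalPrefixFreeWords α (2 * m + 2)).ncard + (evenPalPrefixFreeWords α (m + 1)).ncard =
      (evenPalPrefixFreeWords α (2 * m + 1)).ncard * Nat.card α := by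
  have hdisj : Disjoint (evenPalPrefixFreeWords α (2 * m + 2))
      ((fun x => x ++ x.reverse) '' evenPalPrefixFreeWords α (m + 1)) := by
    rw [Set.disjoint_right]
    rintro _ ⟨x, ⟨hx, -⟩, rfl⟩ ⟨-, hv⟩
    exact hv ⟨x ++ x.reverse, List.ne_nil_of_length_pos (by simp; omega),
      by simp [← two_mul], List.prefix_refl _, by simp⟩
  calc (evenPalPrefixFreeWords α (2 * m + 2)).ncard + (evenPalPrefixFreeWords α (m + 1)).ncard
      = (evenPalPrefixFreeWords α (2 * m + 2)).ncard +
          ((fun x => x ++ x.reverse) '' evenPalPrefixFreeWords α (m + 1)).ncard := by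
        rw [Set.ncard_image_of_injective _ List.append_reverse_injective]
    _ = (evenPalPrefixFreeWords α (2 * m + 2) ∪
          (fun x => x ++ x.reverse) '' evenPalPrefixFreeWords α (m + 1)).ncard :=
        (Set.ncard_union_eq hdisj (finite_evenPalPrefixFreeWords α _)
          ((finite_evenPalPrefixFreeWords α _).image _)).symm
    _ = (evenPalPrefixFreeWords α (2 * m + 1)).ncard * Nat.card α := by
        rw [← setOf_eraseIdx_mem_evenPalPrefixFreeWords, List.ncard_setOf_eraseIdx_mem
          (fun w hw => hw.1) (by omega)]

theorem ncard_unborderedWords_eq_ncard_evenPalPrefixFreeWords [Finite α] (n : ℕ) :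
    (unborderedWords α n).ncard = (evenPalPrefixFreeWords α n).ncard := by
  induction n using Nat.strong_induction_on with
  | _ n ih =>
    obtain ⟨m, rfl | rfl⟩ := Nat.even_or_odd' n
    · cases m with
      | zero => rw [unborderedWords_zero, evenPalPrefixFreeWords_zero]
      | succ m =>
        rw [show 2 * (m + 1) = 2 * m + 2 by ring]
        have hu := ncard_unborderedWords_two_mul_add_two α m
        have hv := ncard_evenPalPrefixFreeWords_two_mul_add_two α m
        rw [ih (2 * m + 1) (by omega), ih (m + 1) (by omega)] at hu
        omega
    · rw [ncard_unborderedWords_two_mul_add_one, ncard_evenPalPrefixFreeWords_two_mul_add_one,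
        ih (2 * m) (by omega)]

end Recurrences

theorem card_unbordered_eq_card_noEvenPalPrefix_general (k n : ℕ) :
    {w : List (Fin k) | w.length = n ∧ ¬ IsBordered w}.ncard =
      {w : List (Fin k) | w.length = n ∧ ¬ HasEvenPalPrefix w}.ncard :=
  ncard_unborderedWords_eq_ncard_evenPalPrefixFreeWords (Fin k) n

/-- for all `k ≥ 1` and `n ≥ 1`, the number of unbordered length-`n` words
over a `k`-letter alphabet equals the number of length-`n` words with no even palindromic
prefix: `u_k(n) = v_k(n)`. -/
theorem card_unbordered_eq_card_noEvenPalPrefix (k n : ℕ) (hk : 1 ≤ k) (hn : 1 ≤ n) :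
    {w : List (Fin k) | w.length = n ∧ ¬ IsBordered w}.ncard =
      {w : List (Fin k) | w.length = n ∧ ¬ HasEvenPalPrefix w}.ncard :=
  card_unbordered_eq_card_noEvenPalPrefix_general k n
end

section
/- For every odd n and every set S of positive integers, opp_{k,S}(n) = epp_{k,S}(n): the number of length-n words over a k-letter alphabet whose nontrivial odd palindromic prefix orders are exactly S equals the number of length-n words whose even palindromic prefix orders are exactly S. -/
/-- The set of orders of nontrivial odd palindromic prefixes of a word `w`. -/
def oppOrders {α : Type*} (w : List α) : Set ℕ :=
  {i | 1 ≤ i ∧ 2 * i + 1 ≤ w.length ∧ (w.take (2 * i + 1)).reverse = w.take (2 * i + 1)}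

/-- `epp k S n`: the number of length-`n` words over a `k`-letter alphabet whose set of
even palindromic prefix orders is exactly `S`. -/
noncomputable def epp (k : ℕ) (S : Set ℕ) (n : ℕ) : ℕ :=
  {w : List (Fin k) | w.length = n ∧ eppOrders w = S}.ncard

/-- `opp k S n`: the number of length-`n` words over a `k`-letter alphabet whose set of
nontrivial odd palindromic prefix orders is exactly `S`. -/
noncomputable def opp (k : ℕ) (S : Set ℕ) (n : ℕ) : ℕ :=
  {w : List (Fin k) | w.length = n ∧ oppOrders w = S}.ncard

section Aux

-- helper : getElem congruence on indices
lemma getElem_idx_congr {α : Type*} (w : List α) {a b : ℕ} (hab : a = b) (ha : a < w.length) :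
    w[a]'ha = w[b]'(hab ▸ ha) := by subst hab; rfl

/-- Pointwise characterization of palindromic prefixes. -/
lemma pal_iff {α : Type*} {w : List α} {m : ℕ} (hm : m ≤ w.length) :
    (w.take m).reverse = w.take m ↔
      ∀ j (h : j < m), w[j]'(lt_of_lt_of_le h hm) = w[m - 1 - j]'(by omega) := by
  have hlen : (w.take m).length = m := by simp [Nat.min_eq_left hm]
  constructor
  · intro hpal j hj
    have h1 : ((w.take m).reverse)[j]'(by simpa [hlen] using hj)
        = (w.take m)[j]'(by simpa [hlen] using hj) := by
      simp only [hpal]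
    rw [List.getElem_reverse, List.getElem_take, List.getElem_take] at h1
    rw [getElem_idx_congr w (show (List.take m w).length - 1 - j = m - 1 - j by rw [hlen])] at h1
    exact h1.symm
  · intro h
    apply List.ext_getElem (by simp)
    intro j h1 h2
    rw [List.getElem_reverse, List.getElem_take, List.getElem_take]
    have h2' : j < m := by simpa [hlen] using h2
    rw [getElem_idx_congr w (show (List.take m w).length - 1 - j = m - 1 - j by rw [hlen])]
    exact (h j h2').symm

variable {α : Type*} [AddCommGroup α]

/-- The "finite difference" map: `(Fmap w)[j] = w[j] + w[j+1]`, last letter kept. -/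
def Fmap (w : List α) : List α :=
  List.ofFn (fun j : Fin w.length =>
    if h : (j : ℕ) + 1 < w.length then w[(j : ℕ)] + w[(j : ℕ) + 1] else w[(j : ℕ)])

@[simp] lemma length_Fmap (w : List α) : (Fmap w).length = w.length := by
  simp [Fmap]

lemma getElem_Fmap (w : List α) (j : ℕ) (h : j < (Fmap w).length) :
    (Fmap w)[j] =
      if h' : j + 1 < w.length then w[j]'(by simpa using h) + w[j+1] else w[j]'(by simpa using h) := by
  simp [Fmap]

lemma getElem_Fmap_of_lt (w : List α) (j : ℕ) (h : j + 1 < w.length)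
    (h2 : j < (Fmap w).length) :
    (Fmap w)[j] = w[j]'(by omega) + w[j+1] := by
  rw [getElem_Fmap, dif_pos h]

/-- Auxiliary backward recursion for the inverse map. -/
def Gaux (b : List α) : ℕ → α
  | 0 => b.getD (b.length - 1) 0
  | (t+1) => b.getD (b.length - 2 - t) 0 - Gaux b t

/-- The inverse of `Fmap`. -/
def Gmap (b : List α) : List α :=
  List.ofFn (fun j : Fin b.length => Gaux b (b.length - 1 - (j : ℕ)))

@[simp] lemma length_Gmap (b : List α) : (Gmap b).length = b.length := by
  simp [Gmap]

lemma getElem_Gmap (b : List α) (j : ℕ) (h : j < (Gmap b).length) :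
    (Gmap b)[j] = Gaux b (b.length - 1 - j) := by
  simp [Gmap]

lemma Gaux_Fmap (w : List α) (t : ℕ) (ht : t < w.length) :
    Gaux (Fmap w) t = w[w.length - 1 - t]'(by omega) := by
  induction t with
  | zero =>
      simp only [Gaux, length_Fmap]
      rw [List.getD_eq_getElem _ _ (show w.length - 1 < (Fmap w).length by simp; omega)]
      rw [getElem_Fmap, dif_neg (by omega)]
      exact getElem_idx_congr w (by omega) _
  | succ t ih =>
      simp only [Gaux, length_Fmap]
      rw [List.getD_eq_getElem _ _ (show w.length - 2 - t < (Fmap w).length by simp; omega)]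
      rw [getElem_Fmap_of_lt w (w.length - 2 - t) (by omega)]
      rw [ih (by omega)]
      rw [getElem_idx_congr w (show w.length - 1 - t = w.length - 2 - t + 1 by omega)]
      rw [add_sub_cancel_right]
      exact getElem_idx_congr w (by omega) _

lemma Gmap_Fmap (w : List α) : Gmap (Fmap w) = w := by
  apply List.ext_getElem (by simp)
  intro j h1 h2
  rw [getElem_Gmap, length_Fmap, Gaux_Fmap w _ (by omega)]
  exact getElem_idx_congr w (by omega) _

lemma Fmap_injective : Function.Injective (Fmap : List α → List α) :=
  Function.LeftInverse.injective Gmap_Fmap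

lemma Fmap_Gmap (b : List α) : Fmap (Gmap b) = b := by
  apply List.ext_getElem (by simp)
  intro j h1 h2
  rw [getElem_Fmap]
  by_cases h : j + 1 < (Gmap b).length
  · rw [dif_pos h]
    rw [getElem_Gmap, getElem_Gmap]
    rw [length_Gmap] at h
    have e1 : b.length - 1 - j = (b.length - 2 - j) + 1 := by omega
    have e2 : b.length - 1 - (j + 1) = b.length - 2 - j := by omega
    rw [e1, e2]
    simp only [Gaux]
    rw [List.getD_eq_getElem _ _ (show b.length - 2 - (b.length - 2 - j) < b.length by omega)]
    rw [getElem_idx_congr b (show b.length - 2 - (b.length - 2 - j) = j by omega)]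
    exact sub_add_cancel _ _
  · rw [dif_neg h]
    rw [getElem_Gmap]
    rw [length_Gmap] at h
    have e1 : b.length - 1 - j = 0 := by omega
    rw [e1]
    simp only [Gaux]
    rw [List.getD_eq_getElem _ _ (show b.length - 1 < b.length by omega)]
    exact getElem_idx_congr b (by omega) _

/-- Core combinatorial step: the order-`i` odd palindromic prefix condition on `w`
corresponds to the order-`i` even one on `Fmap w`. -/
lemma pal_equiv (w : List α) (i : ℕ) (h : 2 * i + 1 ≤ w.length) :
    ((w.take (2*i+1)).reverse = w.take (2*i+1)) ↔
    (((Fmap w).take (2*i)).reverse = (Fmap w).take (2*i)) := by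
  rw [pal_iff h, pal_iff (by simp; omega)]
  constructor
  · intro hp j hj
    rw [getElem_Fmap_of_lt w j (by omega), getElem_Fmap_of_lt w (2*i-1-j) (by omega)]
    have h1 := hp j (by omega)
    have h2 := hp (j+1) (by omega)
    rw [getElem_idx_congr w (show 2*i+1-1-j = 2*i - j by omega)] at h1
    rw [getElem_idx_congr w (show 2*i+1-1-(j+1) = 2*i-1-j by omega)] at h2
    rw [h1, h2, getElem_idx_congr w (show 2*i-1-j+1 = 2*i-j by omega), add_comm]
  · intro hp
    -- first show w[i-t] = w[i+t] for all t ≤ i by induction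
    have key : ∀ t, ∀ _ : t ≤ i, w[i - t]'(by omega) = w[i + t]'(by omega) := by
      intro t
      induction t with
      | zero => intro _; simp
      | succ t ih =>
          intro hti
          have hr := hp (i - t - 1) (by omega)
          rw [getElem_Fmap_of_lt w (i-t-1) (by omega),
              getElem_Fmap_of_lt w (2*i-1-(i-t-1)) (by omega)] at hr
          rw [getElem_idx_congr w (show i-t-1+1 = i-t by omega),
              getElem_idx_congr w (show 2*i-1-(i-t-1) = i+t by omega),
              getElem_idx_congr w (show 2*i-1-(i-t-1)+1 = i+t+1 by omega)] at hr
          rw [ih (by omega)] at hr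
          have : w[i-t-1]'(by omega) = w[i+t+1]'(by omega) :=
            add_right_cancel (hr.trans (add_comm _ _))
          rw [getElem_idx_congr w (show i - (t+1) = i - t - 1 by omega),
              getElem_idx_congr w (show i + (t+1) = i + t + 1 by omega)]
          exact this
    intro j hj
    rw [getElem_idx_congr w (show 2*i+1-1-j = 2*i-j by omega)]
    by_cases hji : j ≤ i
    · have := key (i - j) (by omega)
      rw [getElem_idx_congr w (show i - (i-j) = j by omega),
          getElem_idx_congr w (show i + (i-j) = 2*i-j by omega)] at this
      exact this
    · have := key (j - i) (by omega)
      rw [getElem_idx_congr w (show i - (j-i) = 2*i-j by omega),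
          getElem_idx_congr w (show i + (j-i) = j by omega)] at this
      exact this.symm

lemma eppOrders_Fmap (w : List α) (hodd : Odd w.length) :
    eppOrders (Fmap w) = oppOrders w := by
  ext i
  simp only [eppOrders, oppOrders, Set.mem_setOf_eq, length_Fmap]
  obtain ⟨c, hc⟩ := hodd
  constructor
  · rintro ⟨h1, h2, h3⟩
    have h4 : 2 * i + 1 ≤ w.length := by omega
    exact ⟨h1, h4, (pal_equiv w i h4).2 h3⟩
  · rintro ⟨h1, h2, h3⟩
    exact ⟨h1, by omega, (pal_equiv w i h2).1 h3⟩

end Aux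

/-- for every odd `n` and every set `S` of positive integers,
`opp_{k,S}(n) = epp_{k,S}(n)`. -/
theorem opp_eq_epp_of_odd (k n : ℕ) (S : Set ℕ) (hS : ∀ i ∈ S, 1 ≤ i) (hn : Odd n) :
    opp k S n = epp k S n := by
  obtain ⟨c, hc⟩ := hn
  match k with
  | 0 =>
      have he : ∀ T : Set ℕ, ∀ P : List (Fin 0) → Set ℕ,
          {w : List (Fin 0) | w.length = n ∧ P w = T} = ∅ := by
        intro T P
        ext w
        simp only [Set.mem_setOf_eq, Set.mem_empty_iff_false, iff_false, not_and]
        intro hw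
        match w with
        | [] => simp at hw; omega
        | a :: _ => exact a.elim0
      unfold opp epp
      rw [he S oppOrders, he S eppOrders]
  | (m+1) =>
      unfold opp epp
      have himg : {w : List (Fin (m+1)) | w.length = n ∧ eppOrders w = S} =
          Fmap '' {w : List (Fin (m+1)) | w.length = n ∧ oppOrders w = S} := by
        ext b
        simp only [Set.mem_setOf_eq, Set.mem_image]
        constructor
        · rintro ⟨hlen, hord⟩
          refine ⟨Gmap b, ⟨by simp [hlen], ?_⟩, Fmap_Gmap b⟩
          have : eppOrders (Fmap (Gmap b)) = oppOrders (Gmap b) :=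
            eppOrders_Fmap (Gmap b) (by rw [length_Gmap, hlen]; exact ⟨c, hc⟩)
          rw [Fmap_Gmap] at this
          rw [← this, hord]
        · rintro ⟨w, ⟨hlen, hord⟩, rfl⟩
          refine ⟨by simp [hlen], ?_⟩
          rw [eppOrders_Fmap w (by rw [hlen]; exact ⟨c, hc⟩), hord]
      rw [himg, Set.ncard_image_of_injective _ Fmap_injective]
end

section
/- For every even n ≥ 2 and every set S of positive integers, opp_{k,S}(n) = k · epp_{k,S}(n−1): the number of length-n words over a k-letter alphabet whose nontrivial odd palindromic prefix orders are exactly S equals k times the number of length-(n−1) words whose even palindromic prefix orders are exactly S. -/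
section Aux
variable {β : Type*} {α : Type*} [AddCommGroup α] [Inhabited α] [Inhabited β]

def derivW (w : List α) : List α := List.zipWith (· + ·) w w.tail

def integW (c : α) : List α → List α
  | [] => [c]
  | x :: t => c :: integW (x - c) t

set_option linter.unusedSectionVars false

lemma derivW_length (w : List α) : (derivW w).length = w.length - 1 := by
  simp [derivW]

lemma integW_length (c : α) (v : List α) : (integW c v).length = v.length + 1 := by
  induction v generalizing c with
  | nil => rfl
  | cons x t ih => simp [integW, ih]

lemma integW_headI (c : α) (v : List α) : (integW c v).headI = c := by
  cases v <;> rfl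

lemma derivW_cons (a b : α) (t : List α) : derivW (a :: b :: t) = (a + b) :: derivW (b :: t) := rfl

lemma deriv_integ (c : α) (v : List α) : derivW (integW c v) = v := by
  induction v generalizing c with
  | nil => rfl
  | cons x t ih =>
    show derivW (c :: integW (x - c) t) = x :: t
    cases t with
    | nil => simp [integW, derivW]
    | cons y t' =>
      show derivW (c :: (x - c) :: integW (y - (x - c)) t') = x :: y :: t'
      rw [derivW_cons]
      have h2 : derivW ((x - c) :: integW (y - (x - c)) t') = y :: t' := ih (x - c)
      rw [h2, show c + (x - c) = x by abel]

lemma integ_deriv (w : List α) (hw : w ≠ []) : integW w.headI (derivW w) = w := by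
  induction w with
  | nil => exact absurd rfl hw
  | cons a t ih =>
    cases t with
    | nil => rfl
    | cons b t' =>
      show integW a (derivW (a :: b :: t')) = a :: b :: t'
      rw [derivW_cons]
      show a :: integW (a + b - a) (derivW (b :: t')) = a :: b :: t'
      rw [show a + b - a = b by abel]
      have h := ih (by simp)
      simp only [List.headI] at h
      rw [h]

lemma getD_deriv (w : List α) (j : ℕ) (hj : j + 1 < w.length) :
    (derivW w).getD j default = w.getD j default + w.getD (j+1) default := by
  have h1 : j < (derivW w).length := by rw [derivW_length]; omega
  rw [List.getD_eq_getElem _ _ h1, List.getD_eq_getElem _ _ (by omega : j < w.length),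
    List.getD_eq_getElem _ _ hj]
  simp [derivW, List.getElem_zipWith, List.getElem_tail]

lemma getD_reverse (l : List β) (j : ℕ) (hj : j < l.length) :
    l.reverse.getD j default = l.getD (l.length - 1 - j) default := by
  rw [List.getD_eq_getElem _ _ (by simpa using hj),
    List.getD_eq_getElem _ _ (by omega : l.length - 1 - j < l.length),
    List.getElem_reverse]

lemma pal_iff_getD (l : List β) :
    l.reverse = l ↔ ∀ j < l.length, l.getD j default = l.getD (l.length - 1 - j) default := by
  constructor
  · intro hp j hj
    have := getD_reverse l j hj
    rw [hp] at this
    exact this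
  · intro h
    apply List.ext_getElem (by simp)
    intro j h1 h2
    rw [List.getElem_reverse]
    have h3 := h j h2
    rw [List.getD_eq_getElem _ _ h2,
      List.getD_eq_getElem _ _ (by omega : l.length - 1 - j < l.length)] at h3
    exact h3.symm

lemma getD_take (l : List β) (m j : ℕ) (hj : j < m) (hm : m ≤ l.length) :
    (l.take m).getD j default = l.getD j default := by
  rw [List.getD_eq_getElem _ _ (by simp; omega),
    List.getD_eq_getElem _ _ (by omega : j < l.length)]
  simp [List.getElem_take]

lemma pal_deriv (w : List α) (i : ℕ) (h1 : 1 ≤ i) (hi : 2*i+1 ≤ w.length) :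
    ((w.take (2*i+1)).reverse = w.take (2*i+1)) ↔
      (((derivW w).take (2*i)).reverse = (derivW w).take (2*i)) := by
  set g : ℕ → α := fun j => w.getD j default with hg
  have hlen : (w.take (2*i+1)).length = 2*i+1 := by simp; omega
  have hlw : (derivW w).length = w.length - 1 := derivW_length w
  have hlend : ((derivW w).take (2*i)).length = 2*i := by simp [hlw]; omega
  have hP : ((w.take (2*i+1)).reverse = w.take (2*i+1)) ↔
      ∀ j < 2*i+1, g j = g (2*i - j) := by
    rw [pal_iff_getD, hlen]
    constructor
    · intro h j hj
      have := h j hj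
      rw [getD_take w _ j hj hi, getD_take w _ _ (by omega) hi] at this
      rw [show 2*i+1-1-j = 2*i - j by omega] at this
      exact this
    · intro h j hj
      rw [getD_take w _ j hj hi, getD_take w _ _ (by omega) hi,
        show 2*i+1-1-j = 2*i - j by omega]
      exact h j hj
  have hQ : (((derivW w).take (2*i)).reverse = (derivW w).take (2*i)) ↔
      ∀ j < 2*i, g j + g (j+1) = g (2*i-1-j) + g (2*i-j) := by
    rw [pal_iff_getD, hlend]
    have hmle : 2*i ≤ (derivW w).length := by omega
    constructor
    · intro h j hj
      have h' := h j hj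
      rw [getD_take _ _ j hj hmle, getD_take _ _ _ (by omega) hmle,
        getD_deriv w j (by omega), getD_deriv w (2*i-1-j) (by omega),
        show 2*i-1-j+1 = 2*i-j by omega] at h'
      exact h'
    · intro h j hj
      rw [getD_take _ _ j hj hmle, getD_take _ _ _ (by omega) hmle,
        getD_deriv w j (by omega), getD_deriv w (2*i-1-j) (by omega),
        show 2*i-1-j+1 = 2*i-j by omega]
      exact h j hj
  rw [hP, hQ]
  constructor
  · intro hp j hj
    rw [hp j (by omega), hp (j+1) (by omega), show 2*i-(j+1) = 2*i-1-j by omega]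
    exact add_comm _ _
  · intro hq
    have key : ∀ d a b, a + b = 2*i → a ≤ b → b - a = 2*d →
        g a = g b := by
      intro d
      induction d with
      | zero =>
        intro a b e1 e2 e3
        rw [show a = b by omega]
      | succ d ih =>
        intro a b e1 e2 e3
        have hq' := hq a (by omega)
        rw [show 2*i - a = b by omega, show 2*i-1-a = b-1 by omega] at hq'
        have ih' : g (a+1) = g (b-1) := ih (a+1) (b-1) (by omega) (by omega) (by omega)
        rw [ih', add_comm (g (b-1)) (g b)] at hq'
        exact add_right_cancel hq'
    intro j hj
    rcases le_or_gt j i with hji | hji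
    · exact key (i - j) j (2*i - j) (by omega) (by omega) (by omega)
    · exact (key (j - i) (2*i - j) j (by omega) (by omega) (by omega)).symm

lemma oppOrders_eq_eppOrders_deriv (w : List α) : oppOrders w = eppOrders (derivW w) := by
  ext i
  simp only [oppOrders, eppOrders, Set.mem_setOf_eq, derivW_length]
  constructor
  · rintro ⟨h1, h2, h3⟩
    exact ⟨h1, by omega, (pal_deriv w i h1 h2).mp h3⟩
  · rintro ⟨h1, h2, h3⟩
    have h2' : 2*i+1 ≤ w.length := by omega
    exact ⟨h1, h2', (pal_deriv w i h1 h2').mpr h3⟩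

end Aux

/-- for every even `n ≥ 2` and every set `S` of positive integers,
`opp_{k,S}(n) = k · epp_{k,S}(n−1)`. -/
theorem opp_eq_mul_epp_of_even (k n : ℕ) (S : Set ℕ) (hS : ∀ i ∈ S, 1 ≤ i)
    (hn : Even n) (hn2 : 2 ≤ n) :
    opp k S n = k * epp k S (n - 1) := by
  rcases k with _ | m
  · have h0 : {w : List (Fin 0) | w.length = n ∧ oppOrders w = S} = ∅ := by
      ext w
      simp only [Set.mem_setOf_eq, Set.mem_empty_iff_false, iff_false, not_and]
      intro hl
      exfalso
      cases w with
      | nil => simp at hl; omega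
      | cons a _ => exact absurd a.2 (by omega)
    simp [opp, h0]
  · set α := Fin (m+1)
    rw [opp, epp, ← Nat.card_coe_set_eq, ← Nat.card_coe_set_eq]
    have e : {w : List α // w ∈ {w : List α | w.length = n ∧ oppOrders w = S}} ≃
        α × {v : List α // v ∈ {v : List α | v.length = n - 1 ∧ eppOrders v = S}} :=
      { toFun := fun w => (w.1.headI, ⟨derivW w.1, by
          obtain ⟨hl, ho⟩ := w.2
          exact ⟨by rw [derivW_length, hl], by rw [← oppOrders_eq_eppOrders_deriv, ho]⟩⟩)
        invFun := fun p => ⟨integW p.1 p.2.1, by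
          obtain ⟨hl, he⟩ := p.2.2
          constructor
          · rw [integW_length, hl]; omega
          · rw [oppOrders_eq_eppOrders_deriv, deriv_integ, he]⟩
        left_inv := fun w => by
          apply Subtype.ext
          exact integ_deriv w.1 (by
            have hl := w.2.1
            intro hnil
            rw [hnil] at hl
            simp at hl
            omega)
        right_inv := fun p => by
          apply Prod.ext
          · exact integW_headI _ _
          · apply Subtype.ext
            exact deriv_integ _ _ }
    rw [Nat.card_congr e, Nat.card_prod, Nat.card_eq_fintype_card, Fintype.card_fin]
end

section
/- Let k ≥ 1 and let w = a_1 a_2 ⋯ a_n be a word of odd length n over Z/kZ, and define g(w) = (a_1+a_2)(a_2+a_3)⋯(a_{n−1}+a_n), with addition modulo k. Then for every i with 1 ≤ i ≤ (n−1)/2, w has an odd palindromic prefix of order i if and only if g(w) has an even palindromic prefix of order i. -/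
/-- The map `g` sending `a₁a₂⋯aₙ` over `ℤ/kℤ` to `(a₁+a₂)(a₂+a₃)⋯(a_{n−1}+aₙ)`,
addition modulo `k`. -/
def gmap {k : ℕ} (w : List (ZMod k)) : List (ZMod k) :=
  List.zipWith (· + ·) w w.tail

private lemma pal_iff_s10 {α : Type*} [Inhabited α] (l : List α) :
    l.reverse = l ↔ ∀ j, j < l.length → l.getD (l.length - 1 - j) default = l.getD j default := by
  constructor
  · intro hp j h
    have h' : j < l.reverse.length := by simpa
    have := List.getElem_reverse (l := l) (i := j) (h := h')
    rw [List.getElem_of_eq hp h'] at this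
    rw [List.getD_eq_getElem _ _ (by omega), List.getD_eq_getElem _ _ h]
    exact this.symm
  · intro h
    apply List.ext_getElem (by simp)
    intro j h1 h2
    rw [List.getElem_reverse]
    have := h j h2
    rwa [List.getD_eq_getElem _ _ (by omega), List.getD_eq_getElem _ _ h2] at this

/-- for `k ≥ 1` and a word `w` of odd length `n` over `ℤ/kℤ`, and for each
`1 ≤ i ≤ (n−1)/2` (equivalently `2i+1 ≤ n`), `w` has an odd palindromic prefix of order `i`
if and only if `g(w)` has an even palindromic prefix of order `i`. -/
theorem oddPalPrefix_iff_evenPalPrefix_gmap (k : ℕ) (hk : 1 ≤ k) (w : List (ZMod k))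
    (hodd : Odd w.length) (i : ℕ) (hi : 1 ≤ i) (hin : 2 * i + 1 ≤ w.length) :
    (w.take (2 * i + 1)).reverse = w.take (2 * i + 1) ↔
      ((gmap w).take (2 * i)).reverse = (gmap w).take (2 * i) := by
  have hg : (gmap w).length = w.length - 1 := by
    simp only [gmap, List.length_zipWith, List.length_tail]; omega
  have hl1 : (w.take (2 * i + 1)).length = 2 * i + 1 := by
    rw [List.length_take]; omega
  have hl2 : ((gmap w).take (2 * i)).length = 2 * i := by
    rw [List.length_take]; omega
  set f : ℕ → ZMod k := fun j => w.getD j default with hf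
  set g : ℕ → ZMod k := fun j => (gmap w).getD j default with hgdef
  have htake1 : ∀ j, j < 2 * i + 1 → (w.take (2 * i + 1)).getD j default = f j := by
    intro j hj
    rw [List.getD_eq_getElem _ _ (by omega), hf]
    simp only [List.getElem_take]
    rw [List.getD_eq_getElem _ _ (by omega)]
  have htake2 : ∀ j, j < 2 * i → ((gmap w).take (2 * i)).getD j default = g j := by
    intro j hj
    rw [List.getD_eq_getElem _ _ (by omega), hgdef]
    simp only [List.getElem_take]
    rw [List.getD_eq_getElem _ _ (by omega)]
  have hgel : ∀ j, j < 2 * i → g j = f j + f (j + 1) := by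
    intro j hj
    rw [hgdef, hf]
    simp only
    rw [List.getD_eq_getElem _ _ (by omega), List.getD_eq_getElem _ _ (by omega),
      List.getD_eq_getElem _ _ (by omega)]
    simp only [gmap, List.getElem_zipWith, List.getElem_tail]
  rw [pal_iff_s10, pal_iff_s10, hl1, hl2]
  have L1 : (∀ j, j < 2 * i + 1 →
      (w.take (2*i+1)).getD (2*i+1-1-j) default = (w.take (2*i+1)).getD j default) ↔
      (∀ j, j < 2 * i + 1 → f (2 * i - j) = f j) := by
    constructor <;> intro h j hj <;>
      [(rw [← htake1 _ hj, ← htake1 (2*i-j) (by omega)];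
        have := h j hj; rwa [show 2*i+1-1-j = 2*i-j by omega] at this);
       (rw [htake1 _ hj, show 2*i+1-1-j = 2*i-j by omega, htake1 (2*i-j) (by omega)];
        exact h j hj)]
  have L2 : (∀ j, j < 2 * i →
      ((gmap w).take (2*i)).getD (2*i-1-j) default = ((gmap w).take (2*i)).getD j default) ↔
      (∀ j, j < 2 * i → g (2 * i - 1 - j) = g j) := by
    constructor <;> intro h j hj <;>
      [(rw [← htake2 _ hj, ← htake2 (2*i-1-j) (by omega)]; exact h j hj);
       (rw [htake2 _ hj, htake2 (2*i-1-j) (by omega)]; exact h j hj)]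
  rw [L1, L2]
  constructor
  · intro h j hj
    rw [hgel j hj, hgel (2*i-1-j) (by omega)]
    have h1 := h j (by omega)
    have h2 := h (j+1) (by omega)
    rw [show 2*i-(j+1) = 2*i-j-1 by omega] at h2
    rw [show 2*i-1-j = 2*i-j-1 by omega, show 2*i-j-1+1 = 2*i-j by omega, h1, h2, add_comm]
  · intro h
    have key : ∀ d, d ≤ i → f (i - d) = f (i + d) := by
      intro d
      induction d with
      | zero => intro _; simp
      | succ d ih =>
        intro hd
        have hih := ih (by omega)
        have hj := h (i - d - 1) (by omega)
        rw [hgel (i - d - 1) (by omega), hgel (2*i-1-(i-d-1)) (by omega),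
          show 2*i-1-(i-d-1) = i+d by omega, show i-d-1+1 = i-d by omega, hih] at hj
        rw [show i-(d+1) = i-d-1 by omega, show i+(d+1) = i+d+1 by omega]
        linear_combination -hj
    intro j hj
    rcases le_or_gt j i with hji | hji
    · have := key (i - j) (by omega)
      rwa [show i-(i-j) = j by omega, show i+(i-j) = 2*i-j by omega, eq_comm] at this
    · have := key (j - i) (by omega)
      rwa [show i-(j-i) = 2*i-j by omega, show i+(j-i) = j by omega] at this
end

section
/- Let w be a word and a a word of length at most 1. Then w·a has a nontrivial palindromic prefix if and only if w·a·w^R has a nontrivial proper palindromic prefix (a palindromic prefix of length at least 2 and strictly less than |w·a·w^R|). -/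
/-- If `p` is a palindromic prefix of a palindrome `s`, then the prefix of `s` of length
`|p| - (|s| - |p|)` is also a palindrome. -/
theorem pal_step {α : Type*} {s p : List α} (hs : s.reverse = s) (hp : p.reverse = p)
    (hpre : p <+: s) (c : ℕ) (hc : c = p.length - (s.length - p.length)) :
    (s.take c).reverse = s.take c := by
  set d := s.length - p.length with hd
  have hps : p.length ≤ s.length := hpre.length_le
  have hsuf : p <:+ s := by
    have h := List.reverse_suffix.mpr hpre
    rwa [hp, hs] at h
  obtain ⟨t, ht⟩ := hsuf
  have hdl : t.length = d := by
    have := congrArg List.length ht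
    simp only [List.length_append] at this
    omega
  have h1 : s.drop d = p := by rw [← hdl, ← ht, List.drop_left]
  have h2 : s.take p.length = p := (List.prefix_iff_eq_take.mp hpre).symm
  have h3 : p.drop d = p.take c := by
    conv_lhs => rw [← h2]
    rw [List.drop_take, h1, hc]
  have h4 : s.take c = p.take c := by
    rw [← h2, List.take_take]
    congr 1
    omega
  rw [h4, ← h3, List.reverse_drop, hp, ← hc]
  exact h3.symm

/-- for a word `w` and a word `a` of length at most `1`, the word `w·a` has
a nontrivial palindromic prefix (a palindromic prefix of length `≥ 2`) if and only if
`w·a·w^R` has a nontrivial proper palindromic prefix (a palindromic prefix of length `≥ 2`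
and `< |w·a·w^R|`). -/
theorem nontrivPalPrefix_iff {α : Type*} (w a : List α) (ha : a.length ≤ 1) :
    (∃ p : List α, 2 ≤ p.length ∧ p <+: w ++ a ∧ p.reverse = p) ↔
      (∃ p : List α, 2 ≤ p.length ∧ p.length < (w ++ a ++ w.reverse).length ∧
        p <+: w ++ a ++ w.reverse ∧ p.reverse = p) := by
  have ha' : a.reverse = a := by
    rcases a with _ | ⟨x, _ | ⟨y, t⟩⟩ <;> simp_all
  have hs : (w ++ a ++ w.reverse).reverse = w ++ a ++ w.reverse := by
    simp [List.reverse_append, ha', List.append_assoc]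
  constructor
  · rintro ⟨p, h2, hpre, hp⟩
    refine ⟨p, h2, ?_, hpre.trans (List.prefix_append _ _), hp⟩
    have hl := hpre.length_le
    simp only [List.length_append, List.length_reverse] at hl ⊢
    omega
  · rintro ⟨p, h2, hlt, hpre, hp⟩
    have main : ∀ n, ∀ p : List α, p.length ≤ n → 2 ≤ p.length →
        p.length < (w ++ a ++ w.reverse).length → p <+: w ++ a ++ w.reverse →
        p.reverse = p → ∃ q : List α, 2 ≤ q.length ∧ q <+: w ++ a ∧ q.reverse = q := by
      intro n
      induction n with
      | zero => intro p h0 h2 _ _ _; omega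
      | succ n ih =>
        intro p hn h2 hlt hpre hp
        by_cases hle : p.length ≤ w.length + a.length
        · refine ⟨p, h2, ?_, hp⟩
          refine List.prefix_of_prefix_length_le hpre (List.prefix_append _ _) ?_
          simpa using hle
        · set c := p.length - ((w ++ a ++ w.reverse).length - p.length) with hc
          have hps : p.length ≤ (w ++ a ++ w.reverse).length := hpre.length_le
          have hcl : 2 ≤ c ∧ c < p.length := by
            simp only [List.length_append, List.length_reverse] at *
            omega
          have hpal := pal_step hs hp hpre c hc
          have hlen : ((w ++ a ++ w.reverse).take c).length = c := by
            rw [List.length_take]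
            omega
          exact ih _ (by omega) (by omega) (by omega)
            (List.take_prefix _ _) hpal
    exact main p.length p le_rfl h2 hlt hpre hp
end

section
/- Let A_k(n) denote the number of length-n words over a k-letter alphabet having no nontrivial palindromic prefix. Then for all n ≥ 1: A_k(2n) = k·A_k(2n−1) − A_k(n) and A_k(2n+1) = k·A_k(2n) − A_k(n+1). -/
/-- A word has a nontrivial palindromic prefix if some prefix of length `≥ 2` is a
palindrome. -/
def HasNontrivPalPrefix {α : Type*} (w : List α) : Prop :=
  ∃ p : List α, 2 ≤ p.length ∧ p <+: w ∧ p.reverse = p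

/-- `A k n`: the number of length-`n` words over a `k`-letter alphabet having no
nontrivial palindromic prefix. -/
noncomputable def A (k n : ℕ) : ℕ :=
  {w : List (Fin k) | w.length = n ∧ ¬ HasNontrivPalPrefix w}.ncard

open List Set

namespace ARec

/-- Words of length `m` with no nontrivial palindromic prefix. -/
def S (k m : ℕ) : Set (List (Fin k)) :=
  {w : List (Fin k) | w.length = m ∧ ¬ HasNontrivPalPrefix w}

/-- Palindromes of length `m` whose only nontrivial palindromic prefix is themselves. -/
def T (k m : ℕ) : Set (List (Fin k)) :=
  {w : List (Fin k) | w.length = m ∧ w.reverse = w ∧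
    ∀ p : List (Fin k), 2 ≤ p.length → p <+: w → p.reverse = p → p = w}

lemma A_eq (k m : ℕ) : A k m = (S k m).ncard := rfl

lemma S_fin (k m : ℕ) : (S k m).Finite :=
  (List.finite_length_eq (Fin k) m).subset (fun _ hw => hw.1)

lemma T_fin (k m : ℕ) : (T k m).Finite :=
  (List.finite_length_eq (Fin k) m).subset (fun _ hw => hw.1)

/-- For a palindrome `w`, the suffix of length `ℓ` is the reverse of the prefix of
length `ℓ`. -/
lemma pal_drop {α : Type*} {w : List α} (hw : w.reverse = w) (ℓ : ℕ) :
    w.drop (w.length - ℓ) = (w.take ℓ).reverse := by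
  rw [reverse_take, hw]

/-- If a palindromic prefix of a palindrome overlaps its own reflection, there is a
shorter palindromic prefix. -/
lemma step {α : Type*} {w : List α} (hw : w.reverse = w) {ℓ : ℕ}
    (hq : (w.take ℓ).reverse = w.take ℓ) (h1 : w.length ≤ 2 * ℓ) (h2 : ℓ ≤ w.length) :
    (w.take (2 * ℓ - w.length)).reverse = w.take (2 * ℓ - w.length) := by
  set L := w.length with hL
  set t := L - ℓ with ht
  set ℓ' := 2 * ℓ - L with hℓ'
  have hq_len : (w.take ℓ).length = ℓ := by
    simp only [length_take]; omega
  have e1 : w.take ℓ' = (w.take ℓ).take ℓ' := by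
    rw [take_take]; congr 1; omega
  have e2 : ((w.take ℓ).take ℓ').reverse = (w.take ℓ).drop t := by
    have h := pal_drop hq ℓ'
    rw [hq_len] at h
    rw [← h]; congr 1; omega
  have e3 : (w.take ℓ).drop t = (w.drop t).take ℓ' := by
    rw [drop_take]; congr 1; omega
  have e4 : w.drop t = w.take ℓ := by
    have h := pal_drop hw ℓ
    rw [hq] at h
    exact h
  calc (w.take ℓ').reverse = ((w.take ℓ).take ℓ').reverse := by rw [← e1]
    _ = (w.take ℓ).drop t := e2
    _ = (w.drop t).take ℓ' := e3
    _ = (w.take ℓ).take ℓ' := by rw [e4]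
    _ = w.take ℓ' := e1.symm

/-- If a palindrome `w` with `|w| ≤ 2h` has a nontrivial proper palindromic prefix, then
its prefix of length `h` has a nontrivial palindromic prefix. -/
lemma reduce {α : Type*} {w : List α} (hw : w.reverse = w) (h : ℕ)
    (hh : w.length ≤ 2 * h) :
    ∀ ℓ : ℕ, 2 ≤ ℓ → ℓ < w.length → (w.take ℓ).reverse = w.take ℓ →
      HasNontrivPalPrefix (w.take h) := by
  intro ℓ
  induction ℓ using Nat.strong_induction_on with
  | _ ℓ ih =>
    intro h2 hlt hq
    by_cases hc : ℓ ≤ h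
    · refine ⟨w.take ℓ, ?_, ?_, hq⟩
      · simp only [length_take]; omega
      · have : (w.take h).take ℓ = w.take ℓ := by rw [take_take]; congr 1; omega
        rw [← this]; exact take_prefix _ _
    · push_neg at hc
      have hstep := step hw hq (by omega) (by omega)
      exact ih (2 * ℓ - w.length) (by omega) (by omega) (by omega) hstep

lemma ncard_prod' {α β : Type*} (s : Set α) (t : Set β) :
    (s ×ˢ t).ncard = s.ncard * t.ncard := by
  rw [← Nat.card_coe_set_eq, ← Nat.card_coe_set_eq, ← Nat.card_coe_set_eq,
    Nat.card_congr (Equiv.Set.prod s t), Nat.card_prod]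

/-- Counting step: `k · A_k(m) = A_k(m+1) + |T(m+1)|` for `m ≥ 1`. -/
lemma count_step (k m : ℕ) (hm : 1 ≤ m) :
    k * A k m = A k (m + 1) + (T k (m + 1)).ncard := by
  set f : List (Fin k) × Fin k → List (Fin k) := fun p => p.1 ++ [p.2] with hf
  have hinj : Function.Injective f := by
    rintro ⟨u, a⟩ ⟨v, b⟩ h
    simp only [hf] at h
    obtain ⟨h1, h2⟩ := List.append_inj' h (by simp)
    simp only [List.cons.injEq] at h2
    exact Prod.ext h1 h2.1
  have himg : f '' (S k m ×ˢ (Set.univ : Set (Fin k))) = S k (m + 1) ∪ T k (m + 1) := by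
    ext w
    constructor
    · rintro ⟨⟨u, a⟩, ⟨⟨hulen, hunp⟩, -⟩, rfl⟩
      simp only [hf]
      have hwlen : (u ++ [a]).length = m + 1 := by simp [hulen]
      by_cases hP : HasNontrivPalPrefix (u ++ [a])
      · right
        have hmin : ∀ p : List (Fin k), 2 ≤ p.length → p <+: u ++ [a] →
            p.reverse = p → p = u ++ [a] := by
          intro p hp2 hpp hppal
          have hple : p.length ≤ m + 1 := by
            have := hpp.length_le; omega
          by_cases hplem : p.length ≤ m
          · exfalso
            apply hunp
            refine ⟨p, hp2, ?_, hppal⟩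
            have hpt : p = (u ++ [a]).take p.length := prefix_iff_eq_take.mp hpp
            have hlen' : p.length ≤ u.length := by rw [hulen]; exact hplem
            rw [take_append_of_le_length hlen'] at hpt
            rw [hpt]; exact take_prefix _ _
          · exact hpp.eq_of_length (by rw [hwlen]; omega)
        obtain ⟨p, hp2, hpp, hppal⟩ := hP
        have hpw := hmin p hp2 hpp hppal
        refine ⟨hwlen, ?_, hmin⟩
        rw [← hpw]; exact hppal
      · left; exact ⟨hwlen, hP⟩
    · intro hw
      have hwlen : w.length = m + 1 := by
        rcases hw with h | h
        · exact h.1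
        · exact h.1
      have hwne : w ≠ [] := by
        intro h; rw [h] at hwlen; simp at hwlen
      refine ⟨(w.dropLast, w.getLast hwne), ⟨⟨?_, ?_⟩, trivial⟩, ?_⟩
      · simp [hwlen]
      · intro ⟨p, hp2, hpp, hppal⟩
        have hpw : p <+: w := hpp.trans (dropLast_prefix w)
        rcases hw with h | h
        · exact h.2 ⟨p, hp2, hpw, hppal⟩
        · have := h.2.2 p hp2 hpw hppal
          have hlen := hpp.length_le
          rw [this] at hlen
          simp [hwlen] at hlen
      · exact dropLast_append_getLast hwne
  have hcard1 : (f '' (S k m ×ˢ (Set.univ : Set (Fin k)))).ncard = A k m * k := by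
    rw [Set.ncard_image_of_injective _ hinj, ncard_prod', A_eq, Set.ncard_univ,
      Nat.card_eq_fintype_card, Fintype.card_fin]
  have hdisj : Disjoint (S k (m + 1)) (T k (m + 1)) := by
    rw [Set.disjoint_left]
    rintro w ⟨hwlen, hwnp⟩ ⟨hwlen', hwpal, -⟩
    exact hwnp ⟨w, by omega, prefix_refl w, hwpal⟩
  have hcard2 : (S k (m + 1) ∪ T k (m + 1)).ncard
      = A k (m + 1) + (T k (m + 1)).ncard := by
    rw [Set.ncard_union_eq hdisj (S_fin k (m + 1)) (T_fin k (m + 1)), A_eq]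
  rw [← hcard2, ← himg, hcard1, Nat.mul_comm]

/-- `|T(2n)| = A_k(n)` for `n ≥ 1`. -/
lemma T_even (k n : ℕ) (hn : 1 ≤ n) : (T k (2 * n)).ncard = A k n := by
  have himg : (fun u : List (Fin k) => u ++ u.reverse) '' S k n = T k (2 * n) := by
    ext w
    constructor
    · rintro ⟨u, ⟨hulen, hunp⟩, rfl⟩
      dsimp only
      have hwlen : (u ++ u.reverse).length = 2 * n := by simp [hulen]; omega
      have hwpal : (u ++ u.reverse).reverse = u ++ u.reverse := by
        simp [reverse_append]
      refine ⟨hwlen, hwpal, ?_⟩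
      intro p hp2 hpp hppal
      by_contra hne
      have hplt : p.length < 2 * n := by
        have := hpp.length_le
        rw [hwlen] at this
        rcases this.lt_or_eq with h | h
        · exact h
        · exact absurd (hpp.eq_of_length (by omega)) hne
      have hq : ((u ++ u.reverse).take p.length).reverse
          = (u ++ u.reverse).take p.length := by
        rw [← prefix_iff_eq_take.mp hpp]; exact hppal
      have := reduce hwpal n (by omega) p.length hp2 (by omega) hq
      rw [take_left' hulen] at this
      exact hunp this
    · rintro ⟨hwlen, hwpal, hmin⟩
      refine ⟨w.take n, ⟨?_, ?_⟩, ?_⟩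
      · simp [hwlen]; omega
      · intro ⟨p, hp2, hpp, hppal⟩
        have hpw : p <+: w := hpp.trans (take_prefix _ _)
        have := hmin p hp2 hpw hppal
        have hlen := hpp.length_le
        rw [this] at hlen
        simp [hwlen] at hlen
        omega
      · show w.take n ++ (w.take n).reverse = w
        have hdrop : w.drop n = (w.take n).reverse := by
          have h := pal_drop hwpal n
          rw [hwlen, show 2 * n - n = n from by omega] at h
          exact h
        rw [← hdrop, take_append_drop]
  rw [← himg, Set.ncard_image_of_injOn, A_eq]
  rintro u ⟨hulen, -⟩ v ⟨hvlen, -⟩ h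
  exact (List.append_inj h (by omega)).1

/-- `|T(2n+1)| = A_k(n+1)` for `n ≥ 1`. -/
lemma T_odd (k n : ℕ) (hn : 1 ≤ n) : (T k (2 * n + 1)).ncard = A k (n + 1) := by
  have himg : (fun u : List (Fin k) => u ++ (u.take n).reverse) '' S k (n + 1)
      = T k (2 * n + 1) := by
    ext w
    constructor
    · rintro ⟨u, ⟨hulen, hunp⟩, rfl⟩
      dsimp only
      have hwlen : (u ++ (u.take n).reverse).length = 2 * n + 1 := by
        simp [hulen]; omega
      obtain ⟨a, ha⟩ : ∃ a, u.drop n = [a] := by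
        apply List.length_eq_one_iff.mp
        simp [hulen]
      have hu : u = u.take n ++ [a] := by
        rw [← ha, take_append_drop]
      have hwpal : (u ++ (u.take n).reverse).reverse = u ++ (u.take n).reverse := by
        nth_rewrite 1 [hu]
        nth_rewrite 3 [hu]
        simp [reverse_append]
      refine ⟨hwlen, hwpal, ?_⟩
      intro p hp2 hpp hppal
      by_contra hne
      have hplt : p.length < 2 * n + 1 := by
        have := hpp.length_le
        rw [hwlen] at this
        rcases this.lt_or_eq with h | h
        · exact h
        · exact absurd (hpp.eq_of_length (by omega)) hne
      have hq : ((u ++ (u.take n).reverse).take p.length).reverse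
          = (u ++ (u.take n).reverse).take p.length := by
        rw [← prefix_iff_eq_take.mp hpp]; exact hppal
      have := reduce hwpal (n + 1) (by omega) p.length hp2 (by omega) hq
      rw [take_left' hulen] at this
      exact hunp this
    · rintro ⟨hwlen, hwpal, hmin⟩
      refine ⟨w.take (n + 1), ⟨?_, ?_⟩, ?_⟩
      · simp [hwlen]; omega
      · intro ⟨p, hp2, hpp, hppal⟩
        have hpw : p <+: w := hpp.trans (take_prefix _ _)
        have := hmin p hp2 hpw hppal
        have hlen := hpp.length_le
        rw [this] at hlen
        simp [hwlen] at hlen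
        omega
      · show w.take (n + 1) ++ ((w.take (n + 1)).take n).reverse = w
        have htt : (w.take (n + 1)).take n = w.take n := by
          rw [take_take]; congr 1; omega
        rw [htt]
        have hdrop : w.drop (n + 1) = (w.take n).reverse := by
          have h := pal_drop hwpal n
          rw [hwlen, show 2 * n + 1 - n = n + 1 from by omega] at h
          exact h
        rw [← hdrop, take_append_drop]
  rw [← himg, Set.ncard_image_of_injOn, A_eq]
  rintro u ⟨hulen, -⟩ v ⟨hvlen, -⟩ h
  exact (List.append_inj h (by omega)).1

end ARec

/-- for all `n ≥ 1`, `A_k(2n) = k·A_k(2n−1) − A_k(n)` and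
`A_k(2n+1) = k·A_k(2n) − A_k(n+1)` (as integers). -/
theorem A_recurrence (k n : ℕ) (hn : 1 ≤ n) :
    (A k (2 * n) : ℤ) = k * A k (2 * n - 1) - A k n ∧
      (A k (2 * n + 1) : ℤ) = k * A k (2 * n) - A k (n + 1) := by
  have h1 := ARec.count_step k (2 * n - 1) (by omega)
  have h2 := ARec.count_step k (2 * n) (by omega)
  have he : 2 * n - 1 + 1 = 2 * n := by omega
  rw [he, ARec.T_even k n hn] at h1
  rw [ARec.T_odd k n hn] at h2
  constructor
  · have : (k : ℤ) * A k (2 * n - 1) = A k (2 * n) + A k n := by exact_mod_cast h1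
    linarith
  · have : (k : ℤ) * A k (2 * n) = A k (2 * n + 1) + A k (n + 1) := by exact_mod_cast h2
    linarith
end

section
/- Let k ≥ 2, let A_k(n) be the number of length-n words over a k-letter alphabet having no nontrivial palindromic prefix, and set T_k(n) = A_k(n)·k^{−n}. Then for all n ≥ 1, T_k(2n) = 2 − (k+1)·∑_{i=1}^{n} T_k(i)·k^{−i}. -/
/-- `T k n = A k n / kⁿ`. -/
noncomputable def T (k n : ℕ) : ℝ := (A k n : ℝ) / (k : ℝ) ^ n

namespace List

variable {α : Type*} {p q w : List α}

theorem reverse_eq_self_of_isPrefix_of_isSuffix (hp : p.reverse = p) (hpre : q <+: p)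
    (hsuf : q <:+ p) : q.reverse = q :=
  have hrev : q.reverse <+: p := hp ▸ reverse_prefix.2 hsuf
  ((prefix_of_prefix_length_le hrev hpre (by simp)).eq_of_length (by simp))

theorem IsPrefix.isSuffix_of_reverse_eq_self (h : p <+: w) (hp : p.reverse = p)
    (hw : w.reverse = w) : p <:+ w := by
  rw [← hp, ← hw]
  exact reverse_suffix.2 h

theorem take_isSuffix_of_isPrefix_of_isSuffix (hpre : p <+: w) (hsuf : p <:+ w)
    (hlen : w.length ≤ 2 * p.length) : p.take (2 * p.length - w.length) <:+ p := by
  obtain ⟨r, rfl⟩ := hpre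
  obtain ⟨s, hs⟩ := hsuf
  have hsr : s.length = r.length := by
    have := congrArg length hs; simp only [length_append] at this; omega
  have hp := congrArg (take p.length) hs
  rw [take_left' rfl, take_append, take_of_length_le (by simp only [length_append] at hlen; omega)] at hp
  refine ⟨s, ?_⟩
  convert hp using 3
  simp
  omega

theorem exists_palindrome_prefix_two_mul_length_le (hw : w.reverse = w) (hp : p.reverse = p)
    (hpw : p <+: w) (h2 : 2 ≤ p.length) (hlt : p.length < w.length) :
    ∃ q : List α, q <+: w ∧ q.reverse = q ∧ 2 ≤ q.length ∧ 2 * q.length ≤ w.length + 1 := by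
  induction hl : p.length using Nat.strong_induction_on generalizing p with
  | _ l ih =>
    by_cases hshort : 2 * p.length ≤ w.length + 1
    · exact ⟨p, hpw, hp, h2, hshort⟩
    have hborder := take_isSuffix_of_isPrefix_of_isSuffix hpw
      (hpw.isSuffix_of_reverse_eq_self hp hw) (by omega)
    have hq : (p.take (2 * p.length - w.length)).length = 2 * p.length - w.length := by
      simp only [length_take]; omega
    exact ih _ (by omega) (reverse_eq_self_of_isPrefix_of_isSuffix hp (take_prefix _ _) hborder)
      ((take_prefix _ _).trans hpw) (by omega) (by omega) rfl

theorem eq_take_append_reverse_take_of_reverse_eq_self (hw : w.reverse = w) :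
    w = w.take ((w.length + 1) / 2) ++ (w.take (w.length / 2)).reverse := by
  rw [reverse_take, hw, show w.length - w.length / 2 = (w.length + 1) / 2 by omega,
    take_append_drop]

theorem reverse_append_reverse_take {u : List α} {j : ℕ} (h₁ : j ≤ u.length)
    (h₂ : u.length ≤ j + 1) : (u ++ (u.take j).reverse).reverse = u ++ (u.take j).reverse := by
  rcases h₁.eq_or_lt with rfl | hlt
  · simp
  obtain ⟨v, c, rfl⟩ : ∃ v c, u = v ++ [c] := by
    have hne : u ≠ [] := ne_nil_of_length_pos (by omega)
    exact ⟨u.dropLast, u.getLast hne, (dropLast_concat_getLast hne).symm⟩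
  rw [take_left' (by simp only [length_append, length_singleton] at h₂ hlt; omega)]
  simp

end List

section Palindromes

variable {α : Type*} {u w : List α}

theorem HasNontrivPalPrefix.mono (h : HasNontrivPalPrefix u) (huw : u <+: w) :
    HasNontrivPalPrefix w :=
  let ⟨p, h2, hp, hpal⟩ := h
  ⟨p, h2, hp.trans huw, hpal⟩

theorem hasNontrivPalPrefix_iff_dropLast (hw : 2 ≤ w.length) :
    HasNontrivPalPrefix w ↔ HasNontrivPalPrefix w.dropLast ∨ w.reverse = w := by
  refine ⟨fun ⟨p, h2, hp, hpal⟩ => ?_, ?_⟩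
  · rcases hp.length_le.eq_or_lt with hlen | hlt
    · exact .inr (hp.eq_of_length hlen ▸ hpal)
    · exact .inl ⟨p, h2, by
      rw [List.dropLast_eq_take, List.prefix_take_iff]; exact ⟨hp, by omega⟩, hpal⟩
  · rintro (h | hpal)
    · exact h.mono w.dropLast_prefix
    · exact ⟨w, hw, List.prefix_refl w, hpal⟩

theorem hasNontrivPalPrefix_dropLast_iff_take (hw : w.reverse = w) (h2 : 2 ≤ w.length) :
    HasNontrivPalPrefix w.dropLast ↔ HasNontrivPalPrefix (w.take ((w.length + 1) / 2)) := by
  rw [List.dropLast_eq_take]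
  refine ⟨fun ⟨p, hp2, hp, hpal⟩ => ?_, fun h => h.mono ?_⟩
  · rw [List.prefix_take_iff] at hp
    obtain ⟨q, hq, hqpal, hq2, hqlen⟩ :=
      List.exists_palindrome_prefix_two_mul_length_le hw hpal hp.1 hp2 (by omega)
    exact ⟨q, hq2, List.prefix_take_iff.2 ⟨hq, by omega⟩, hqpal⟩
  · exact List.prefix_take_iff.2 ⟨List.take_prefix _ _, by simp; omega⟩

end Palindromes

section Counting

variable {k n L : ℕ}

def palPrefixFree (k n : ℕ) : Set (List (Fin k)) :=
  {w | w.length = n ∧ ¬HasNontrivPalPrefix w}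

def properPalPrefixFree (k n : ℕ) : Set (List (Fin k)) :=
  {w | w.length = n ∧ ¬HasNontrivPalPrefix w.dropLast}

theorem A_eq_ncard_palPrefixFree (k n : ℕ) : A k n = (palPrefixFree k n).ncard := rfl

theorem A_one (k : ℕ) : A k 1 = k := by
  have hrange : palPrefixFree k 1 = Set.range (fun c : Fin k => [c]) := by
    ext w
    constructor
    · rintro ⟨hlen, -⟩
      obtain ⟨c, rfl⟩ := List.length_eq_one_iff.1 hlen
      exact ⟨c, rfl⟩
    · rintro ⟨c, rfl⟩
      exact ⟨rfl, fun ⟨p, h2, hp, _⟩ => by simpa using h2.trans hp.length_le⟩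
  rw [A_eq_ncard_palPrefixFree, hrange, ← Set.image_univ,
    Set.ncard_image_of_injective _ (fun _ _ h => by simpa using h), Set.ncard_univ, Nat.card_fin]

theorem ncard_properPalPrefixFree_succ (k L : ℕ) :
    (properPalPrefixFree k (L + 1)).ncard = k * A k L := by
  have himg : properPalPrefixFree k (L + 1) =
      (fun uc : List (Fin k) × Fin k => uc.1 ++ [uc.2]) '' (palPrefixFree k L ×ˢ Set.univ) := by
    ext w
    constructor
    · rintro ⟨hlen, hfree⟩
      have hne : w ≠ [] := List.ne_nil_of_length_pos (by omega)
      exact ⟨(w.dropLast, w.getLast hne), ⟨⟨by simp [hlen], hfree⟩, trivial⟩,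
        List.dropLast_concat_getLast hne⟩
    · rintro ⟨⟨u, c⟩, ⟨⟨hu, hfree⟩, -⟩, rfl⟩
      exact ⟨by simp [hu], by rwa [List.dropLast_concat]⟩
  have hinj : (palPrefixFree k L ×ˢ Set.univ).InjOn
      (fun uc : List (Fin k) × Fin k => uc.1 ++ [uc.2]) := by
    rintro ⟨u, c⟩ - ⟨v, d⟩ - h
    obtain ⟨rfl, hcd⟩ := List.append_inj' h rfl
    simp_all
  rw [himg, hinj.ncard_image, Set.ncard_prod, Set.ncard_univ, Nat.card_fin,
    ← A_eq_ncard_palPrefixFree, mul_comm]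

theorem palPrefixFree_eq_diff (hn : 2 ≤ n) :
    palPrefixFree k n = properPalPrefixFree k n \ {w | w.reverse = w} := by
  ext w
  simp only [palPrefixFree, properPalPrefixFree, Set.mem_sdiff, Set.mem_ofPred_eq, and_assoc]
  refine and_congr_right fun hlen => ?_
  rw [hasNontrivPalPrefix_iff_dropLast (by omega), not_or]

theorem ncard_properPalPrefixFree_inter_palindrome (hn : 2 ≤ n) :
    (properPalPrefixFree k n ∩ {w | w.reverse = w}).ncard = A k ((n + 1) / 2) := by
  have himg : properPalPrefixFree k n ∩ {w | w.reverse = w} =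
      (fun u => u ++ (u.take (n / 2)).reverse) '' palPrefixFree k ((n + 1) / 2) := by
    ext w
    constructor
    · rintro ⟨⟨hlen, hfree⟩, hpal⟩
      refine ⟨w.take ((n + 1) / 2), ⟨by simp [hlen]; omega, ?_⟩, ?_⟩
      · rwa [← hlen, ← hasNontrivPalPrefix_dropLast_iff_take hpal (by omega)]
      · change _ ++ _ = w
        rw [List.take_take, min_eq_left (by omega), ← hlen]
        exact (List.eq_take_append_reverse_take_of_reverse_eq_self hpal).symm
    · rintro ⟨u, ⟨hu, hfree⟩, rfl⟩
      have hlen : (u ++ (u.take (n / 2)).reverse).length = n := by simp [hu]; omega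
      have hpal := List.reverse_append_reverse_take (u := u) (j := n / 2) (by omega) (by omega)
      refine ⟨⟨hlen, ?_⟩, hpal⟩
      rwa [hasNontrivPalPrefix_dropLast_iff_take hpal (by omega), hlen, List.take_left' hu]
  have hinj : (palPrefixFree k ((n + 1) / 2)).InjOn (fun u => u ++ (u.take (n / 2)).reverse) :=
    fun u hu v hv h => by
      simpa [List.take_left' hu.1, List.take_left' hv.1] using congrArg (List.take ((n + 1) / 2)) h
  rw [himg, hinj.ncard_image, ← A_eq_ncard_palPrefixFree]

theorem A_succ_add_A (hL : 1 ≤ L) : A k (L + 1) + A k ((L + 2) / 2) = k * A k L := by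
  have hpal := ncard_properPalPrefixFree_inter_palindrome (k := k) (n := L + 1) (by omega)
  rw [← ncard_properPalPrefixFree_succ, ← hpal, A_eq_ncard_palPrefixFree,
    palPrefixFree_eq_diff (by omega), add_comm]
  exact Set.ncard_inter_add_ncard_sdiff_eq_ncard _ _
    ((List.finite_length_eq (Fin k) _).subset fun _ hw => hw.1)

end Counting

section Density

variable {k m L : ℕ}

theorem T_succ (hk : k ≠ 0) (hL : 1 ≤ L) :
    T k (L + 1) = T k L - A k ((L + 2) / 2) / (k : ℝ) ^ (L + 1) := by
  have hA : (A k (L + 1) : ℝ) = k * A k L - A k ((L + 2) / 2) := by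
    rw [eq_sub_iff_add_eq]
    exact_mod_cast A_succ_add_A hL
  have hk' : (k : ℝ) ≠ 0 := by exact_mod_cast hk
  simp only [T, hA, pow_succ]
  field_simp

theorem T_two (hk : k ≠ 0) : T k 2 = 2 - ((k : ℝ) + 1) * (T k 1 / k) := by
  have hk' : (k : ℝ) ≠ 0 := by exact_mod_cast hk
  rw [T_succ hk le_rfl, show (1 + 2) / 2 = 1 from rfl]
  simp only [T, A_one]
  field_simp
  ring

theorem T_two_mul_add_two (hk : k ≠ 0) (hm : 1 ≤ m) :
    T k (2 * m + 2) = T k (2 * m) - ((k : ℝ) + 1) * (T k (m + 1) / (k : ℝ) ^ (m + 1)) := by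
  have hk' : (k : ℝ) ≠ 0 := by exact_mod_cast hk
  rw [show 2 * m + 2 = 2 * m + 1 + 1 by ring, T_succ hk (by omega), T_succ hk (by omega),
    show (2 * m + 1 + 2) / 2 = m + 1 by omega, show (2 * m + 2) / 2 = m + 1 by omega]
  simp only [T]
  field_simp
  ring

end Density

/-- for `k ≥ 2` and all `n ≥ 1`,
`T_k(2n) = 2 − (k+1)·∑_{i=1}^{n} T_k(i)·k^{−i}`. -/
theorem T_two_n (k : ℕ) (hk : 2 ≤ k) (n : ℕ) (hn : 1 ≤ n) :
    T k (2 * n) = 2 - ((k : ℝ) + 1) * ∑ i ∈ Finset.Icc 1 n, T k i / (k : ℝ) ^ i := by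
  induction n, hn using Nat.le_induction with
  | base => simpa using T_two (k := k) (by omega)
  | succ m hm ih =>
    rw [show 2 * (m + 1) = 2 * m + 2 by ring, T_two_mul_add_two (by omega) hm, ih,
      Finset.sum_Icc_succ_top (by omega)]
    ring
end

section
/- Let k ≥ 2 and let s_k(n) denote the number of length-n words over a k-letter alphabet having no square prefix. Then the limit α_k = lim_{n→∞} s_k(n)/k^n exists and satisfies α_k > 1 − 1/(k−1). -/
/-- A word has a square prefix if some nonempty prefix of it is a square `x·x`. -/
def HasSquarePrefix {α : Type*} (w : List α) : Prop :=
  ∃ x : List α, x ≠ [] ∧ x ++ x <+: w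

/-- `s k n`: the number of length-`n` words over a `k`-letter alphabet having no square
prefix. -/
noncomputable def s (k n : ℕ) : ℕ :=
  {w : List (Fin k) | w.length = n ∧ ¬ HasSquarePrefix w}.ncard

/-!
Deleting the last letter of a word without square prefix leaves such a word, so
`s k (n + 1) ≤ k * s k n` and `s k n / k ^ n` decreases to a limit. For the bound, a word with
a square prefix `x ++ x`, `|x| = i`, is determined by what follows `x`, so at most a fraction
`k⁻¹ ^ i` of all words have one; summing over `i` gives exactly the fraction `1 / (k - 1)`.
The union bound double counts the words beginning with `aaaa`, which have square prefixes with
`|x| = 1` and `|x| = 2`; they make up a fraction `k⁻³`, which survives in the limit.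
-/

section Words

def squarePrefixWords (α : Type*) (n i : ℕ) : Set (List α) :=
  {w | w.length = n ∧ ∃ x : List α, x.length = i ∧ x ++ x <+: w}

variable {α : Type*}

theorem HasSquarePrefix.mono {u w : List α} (h : u <+: w) :
    HasSquarePrefix u → HasSquarePrefix w :=
  fun ⟨x, hx, hxu⟩ => ⟨x, hx, hxu.trans h⟩

theorem take_drop_append_drop_of_mem_squarePrefixWords {n i : ℕ} {w : List α}
    (hw : w ∈ squarePrefixWords α n i) : (w.drop i).take i ++ w.drop i = w := by
  obtain ⟨-, x, rfl, t, rfl⟩ := hw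
  rw [List.append_assoc, List.drop_left, List.take_left]

theorem setOf_hasSquarePrefix_subset (n : ℕ) :
    {w : List α | w.length = n ∧ HasSquarePrefix w} ⊆
      (squarePrefixWords α n 1 ∪ squarePrefixWords α n 2) ∪
        ⋃ i ∈ Finset.Ico 3 (n + 1), squarePrefixWords α n i := by
  rintro w ⟨hlen, x, hx, hxw⟩
  have hpos : 0 < x.length := List.length_pos_iff.2 hx
  have hle : 2 * x.length ≤ n := by
    simpa [hlen, two_mul] using hxw.length_le
  have hmem : w ∈ squarePrefixWords α n x.length := ⟨hlen, x, rfl, hxw⟩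
  rcases (show x.length = 1 ∨ x.length = 2 ∨ 3 ≤ x.length by omega) with h | h | h
  · exact Or.inl (Or.inl (h ▸ hmem))
  · exact Or.inl (Or.inr (h ▸ hmem))
  · exact Or.inr (Set.mem_biUnion (by simp; omega) hmem)

theorem finite_squarePrefixWords [Finite α] (n i : ℕ) : (squarePrefixWords α n i).Finite :=
  (List.finite_length_eq α n).subset fun _ hw => hw.1

variable [Fintype α]

theorem ncard_setOf_length_eq (n : ℕ) :
    {w : List α | w.length = n}.ncard = Fintype.card α ^ n := by
  rw [← Nat.card_coe_set_eq, ← card_vector, ← Nat.card_eq_fintype_card]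
  rfl

theorem ncard_setOf_length_succ_le (p : List α → Prop) (hp : ∀ w, p w → p w.dropLast)
    (n : ℕ) :
    {w | w.length = n + 1 ∧ p w}.ncard ≤
      {w | w.length = n ∧ p w}.ncard * Fintype.card α := by
  have hfin : {w | w.length = n ∧ p w}.Finite :=
    (List.finite_length_eq α n).subset fun _ hw => hw.1
  have hsub : {w | w.length = n + 1 ∧ p w} ⊆
      (fun v : List α × α => v.1 ++ [v.2]) '' ({w | w.length = n ∧ p w} ×ˢ Set.univ) := by
    rintro w ⟨hlen, hw⟩
    have hne : w ≠ [] := List.ne_nil_of_length_eq_add_one hlen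
    exact ⟨(w.dropLast, w.getLast hne), ⟨⟨by simp [hlen], hp w hw⟩, trivial⟩,
      List.dropLast_append_getLast hne⟩
  calc _ ≤ _ := Set.ncard_le_ncard hsub ((hfin.prod Set.finite_univ).image _)
    _ ≤ _ := Set.ncard_image_le (hfin.prod Set.finite_univ)
    _ = _ := by rw [Set.ncard_prod, Set.ncard_univ, Nat.card_eq_fintype_card]

theorem ncard_squarePrefixWords_le (n i : ℕ) :
    (squarePrefixWords α n i).ncard ≤ Fintype.card α ^ (n - i) := by
  rw [← ncard_setOf_length_eq]
  refine Set.ncard_le_ncard_of_injOn (fun w => w.drop i) (fun w hw => by simp [hw.1]) ?_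
    (List.finite_length_eq α (n - i))
  intro w hw w' hw' h
  rw [← take_drop_append_drop_of_mem_squarePrefixWords hw,
    ← take_drop_append_drop_of_mem_squarePrefixWords hw']
  simp only at h
  rw [h]

theorem pow_le_ncard_squarePrefixWords_inter {n i : ℕ} (h : 4 * i ≤ n) :
    Fintype.card α ^ (n - 3 * i) ≤
      (squarePrefixWords α n i ∩ squarePrefixWords α n (2 * i)).ncard := by
  rw [← ncard_setOf_length_eq]
  refine Set.ncard_le_ncard_of_injOn (fun v => v.take i ++ v.take i ++ v.take i ++ v) ?_ ?_
    ((List.finite_length_eq α n).subset fun _ hw => hw.1.1)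
  · intro v (hv : v.length = n - 3 * i)
    have hx : (v.take i).length = i := by simp; omega
    refine ⟨⟨by simp; omega, v.take i, hx, v.take i ++ v, by simp⟩,
      ⟨by simp; omega, v.take i ++ v.take i, by simp; omega, ?_⟩⟩
    simpa only [List.append_assoc] using
      (List.prefix_append_right_inj (v.take i ++ v.take i ++ v.take i)).2 (List.take_prefix i v)
  · intro v (hv : v.length = n - 3 * i) v' (hv' : v'.length = n - 3 * i) h
    have h3 : ∀ u : List α, u.length = n - 3 * i →
        (u.take i ++ u.take i ++ u.take i).length = 3 * i := fun u hu => by simp; omega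
    calc v = _ := (List.drop_left' (h3 v hv)).symm
      _ = _ := congrArg (List.drop (3 * i)) h
      _ = v' := List.drop_left' (h3 v' hv')

theorem cast_ncard_squarePrefixWords_le [Nonempty α] {n i : ℕ} (hi : i ≤ n) :
    ((squarePrefixWords α n i).ncard : ℝ) ≤
      (Fintype.card α : ℝ) ^ n * (Fintype.card α : ℝ)⁻¹ ^ i := by
  rw [inv_pow, ← pow_sub₀ _ (by positivity) hi]
  exact_mod_cast ncard_squarePrefixWords_le n i

theorem cast_ncard_squarePrefixWords_one_union_two_le [Nonempty α] {n : ℕ} (hn : 4 ≤ n) :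
    ((squarePrefixWords α n 1 ∪ squarePrefixWords α n 2).ncard : ℝ) ≤
      (Fintype.card α : ℝ) ^ n * ((Fintype.card α : ℝ)⁻¹ + (Fintype.card α : ℝ)⁻¹ ^ 2 -
        (Fintype.card α : ℝ)⁻¹ ^ 3) := by
  have hfin := finite_squarePrefixWords (α := α) n
  have hsum := Set.ncard_union_add_ncard_inter _ _ (hfin 1) (hfin 2)
  have hinter : (Fintype.card α : ℝ) ^ n * (Fintype.card α : ℝ)⁻¹ ^ 3 ≤
      (squarePrefixWords α n 1 ∩ squarePrefixWords α n 2).ncard := by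
    rw [inv_pow, ← pow_sub₀ _ (by positivity) (by omega)]
    exact_mod_cast pow_le_ncard_squarePrefixWords_inter (i := 1) hn
  have h1 := cast_ncard_squarePrefixWords_le (α := α) (n := n) (i := 1) (by omega)
  have h2 := cast_ncard_squarePrefixWords_le (α := α) (n := n) (i := 2) (by omega)
  rw [← Nat.cast_inj (R := ℝ), Nat.cast_add, Nat.cast_add] at hsum
  linarith

theorem cast_ncard_biUnion_squarePrefixWords_le (hα : 1 < Fintype.card α) (n m : ℕ) :
    ((⋃ i ∈ Finset.Ico m (n + 1), squarePrefixWords α n i).ncard : ℝ) ≤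
      (Fintype.card α : ℝ) ^ n *
        ((Fintype.card α : ℝ)⁻¹ ^ m / (1 - (Fintype.card α : ℝ)⁻¹)) := by
  have : Nonempty α := Fintype.card_pos_iff.1 (by omega)
  have hx : (Fintype.card α : ℝ)⁻¹ < 1 := inv_lt_one_of_one_lt₀ (by exact_mod_cast hα)
  calc ((⋃ i ∈ Finset.Ico m (n + 1), squarePrefixWords α n i).ncard : ℝ)
      ≤ ∑ i ∈ Finset.Ico m (n + 1), ((squarePrefixWords α n i).ncard : ℝ) := by
        exact_mod_cast Finset.set_ncard_biUnion_le _ _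
    _ ≤ ∑ i ∈ Finset.Ico m (n + 1),
          (Fintype.card α : ℝ) ^ n * (Fintype.card α : ℝ)⁻¹ ^ i :=
        Finset.sum_le_sum fun i hi =>
          cast_ncard_squarePrefixWords_le (Nat.lt_succ_iff.1 (Finset.mem_Ico.1 hi).2)
    _ = (Fintype.card α : ℝ) ^ n *
          ∑ i ∈ Finset.Ico m (n + 1), (Fintype.card α : ℝ)⁻¹ ^ i :=
        (Finset.mul_sum ..).symm
    _ ≤ _ := by
        gcongr
        exact geom_sum_Ico_le_of_lt_one (by positivity) hx

theorem cast_ncard_hasSquarePrefix_le (hα : 1 < Fintype.card α) {n : ℕ} (hn : 4 ≤ n) :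
    ({w : List α | w.length = n ∧ HasSquarePrefix w}.ncard : ℝ) ≤
      (Fintype.card α : ℝ) ^ n *
        (1 / ((Fintype.card α : ℝ) - 1) - 1 / (Fintype.card α : ℝ) ^ 3) := by
  have : Nonempty α := Fintype.card_pos_iff.1 (by omega)
  have hq : (1 : ℝ) < Fintype.card α := by exact_mod_cast hα
  have hfin := finite_squarePrefixWords (α := α) n
  calc _ ≤ ((squarePrefixWords α n 1 ∪ squarePrefixWords α n 2 ∪
          ⋃ i ∈ Finset.Ico 3 (n + 1), squarePrefixWords α n i).ncard : ℝ) := by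
        exact_mod_cast Set.ncard_le_ncard (setOf_hasSquarePrefix_subset n)
          (((hfin 1).union (hfin 2)).union
            ((Finset.Ico 3 (n + 1)).finite_toSet.biUnion fun i _ => hfin i))
    _ ≤ ((squarePrefixWords α n 1 ∪ squarePrefixWords α n 2).ncard : ℝ) +
          (⋃ i ∈ Finset.Ico 3 (n + 1), squarePrefixWords α n i).ncard := by
        exact_mod_cast Set.ncard_union_le _ _
    _ ≤ _ := add_le_add (cast_ncard_squarePrefixWords_one_union_two_le hn)
          (cast_ncard_biUnion_squarePrefixWords_le hα n 3)
    _ = _ := by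
        have : (Fintype.card α : ℝ) - 1 ≠ 0 := by linarith
        field_simp
        ring

end Words

theorem s_succ_le (k n : ℕ) : s k (n + 1) ≤ s k n * k := by
  simpa [s] using ncard_setOf_length_succ_le (fun w : List (Fin k) => ¬ HasSquarePrefix w)
    (fun w hw h => hw (h.mono (List.dropLast_prefix w))) n

theorem antitone_s_div_pow {k : ℕ} (hk : 0 < k) : Antitone fun n => (s k n : ℝ) / k ^ n := by
  refine antitone_nat_of_succ_le fun n => ?_
  have hsucc : (s k (n + 1) : ℝ) ≤ s k n * k := by exact_mod_cast s_succ_le k n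
  rw [div_le_div_iff₀ (by positivity) (by positivity)]
  calc (s k (n + 1) : ℝ) * k ^ n ≤ s k n * k * k ^ n := by gcongr
    _ = s k n * k ^ (n + 1) := by ring

theorem s_add_ncard_hasSquarePrefix (k n : ℕ) :
    s k n + {w : List (Fin k) | w.length = n ∧ HasSquarePrefix w}.ncard = k ^ n := by
  have hset : {w : List (Fin k) | w.length = n ∧ ¬ HasSquarePrefix w} =
      {w | w.length = n} \ {w | w.length = n ∧ HasSquarePrefix w} := by
    ext w
    simp only [Set.mem_sdiff, Set.mem_ofPred_eq]
    tauto
  rw [s, hset, Set.ncard_sdiff_add_ncard_of_subset (fun w hw => hw.1)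
    (List.finite_length_eq _ n), ncard_setOf_length_eq, Fintype.card_fin]

theorem one_sub_inv_add_inv_pow_le_s_div_pow {k n : ℕ} (hk : 1 < k) (hn : 4 ≤ n) :
    1 - 1 / ((k : ℝ) - 1) + 1 / (k : ℝ) ^ 3 ≤ (s k n : ℝ) / (k : ℝ) ^ n := by
  have hbad := cast_ncard_hasSquarePrefix_le (α := Fin k) (by simpa using hk) hn
  have hs : (s k n : ℝ) + {w : List (Fin k) | w.length = n ∧ HasSquarePrefix w}.ncard =
      k ^ n := by
    exact_mod_cast s_add_ncard_hasSquarePrefix k n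
  rw [Fintype.card_fin] at hbad
  rw [le_div_iff₀ (by positivity)]
  linarith

/-- for `k ≥ 2`, the limit `α_k = lim_{n→∞} s_k(n)/kⁿ` exists and
satisfies `α_k > 1 − 1/(k−1)`. -/
theorem exists_limit_s_div_pow (k : ℕ) (hk : 2 ≤ k) :
    ∃ α : ℝ, Filter.Tendsto (fun n : ℕ => (s k n : ℝ) / (k : ℝ) ^ n)
        Filter.atTop (nhds α) ∧
      1 - 1 / ((k : ℝ) - 1) < α := by
  have hbdd : BddBelow (Set.range fun n => (s k n : ℝ) / (k : ℝ) ^ n) :=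
    ⟨0, by rintro _ ⟨n, rfl⟩; positivity⟩
  have hlim := tendsto_atTop_ciInf (antitone_s_div_pow (by omega)) hbdd
  refine ⟨_, hlim, ?_⟩
  have hge := ge_of_tendsto hlim
    (Filter.eventually_atTop.2 ⟨4, fun n hn => one_sub_inv_add_inv_pow_le_s_div_pow hk hn⟩)
  have hpos : (0 : ℝ) < 1 / (k : ℝ) ^ 3 := by positivity
  linarith
end
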